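/- arXiv:1708.07729 — 6 statements merged into one kernel-verified Lean document; each statement's English description precedes it below -/
import Mathlib

section
/- For every n ∈ ℕ and every ν ∉ -ℕ, the determinant of the n×n Hankel matrix H_n^{(1)}(ν) with (i,j)-entry σ_{2i+2j}(ν) equals 2^{-2n(n+1)} · ∏_{k=1}^{2n} (ν+k)^{k-2n-1}. -/
open Finset Matrix

noncomputable def sig (μ : ℂ) : ℕ → ℂ
  | 0 => 0
  | 1 => 1 / (4 * (μ + 1))
  | (k+2) => (∑ j ∈ (Finset.range (k+1)).attach,
      sig μ (j.1+1) * sig μ (k+1-j.1)) / ((k:ℂ) + 2 + μ)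
  decreasing_by
  all_goals (obtain ⟨j, hj⟩ := j; simp only [Finset.mem_range] at hj; simp <;> omega)

lemma sig_one (μ : ℂ) : sig μ 1 = 1 / (4*(μ+1)) := by simp [sig]
lemma sig_zero (μ : ℂ) : sig μ 0 = 0 := by simp [sig]

noncomputable def cv (f g : ℕ → ℂ) (N : ℕ) : ℂ := ∑ k ∈ range (N+1), f k * g (N-k)

lemma cv_eq_coeff (f g : ℕ → ℂ) (N : ℕ) :
    cv f g N = PowerSeries.coeff N (PowerSeries.mk f * PowerSeries.mk g) := by
  rw [PowerSeries.coeff_mul, Finset.Nat.sum_antidiagonal_eq_sum_range_succ_mk]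
  simp [cv]

lemma mk_cv (f g : ℕ → ℂ) :
    PowerSeries.mk (cv f g) = PowerSeries.mk f * PowerSeries.mk g := by
  ext N; rw [PowerSeries.coeff_mk, cv_eq_coeff]

lemma cv_comm (f g : ℕ → ℂ) (N : ℕ) : cv f g N = cv g f N := by
  rw [cv_eq_coeff, cv_eq_coeff, mul_comm]

lemma cv_assoc (f g h : ℕ → ℂ) (N : ℕ) : cv (cv f g) h N = cv f (cv g h) N := by
  rw [cv_eq_coeff, cv_eq_coeff, mk_cv, mk_cv, mul_assoc]

def Good (μ : ℂ) : Prop := ∀ m : ℕ, μ + ((m:ℂ)+1) ≠ 0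

lemma Good.succ {μ : ℂ} (h : Good μ) : Good (μ+1) := by
  intro m
  have := h (m+1); push_cast at this ⊢; intro hc; apply this; linear_combination hc

lemma Good.nz1 {μ : ℂ} (h : Good μ) : μ + 1 ≠ 0 := by
  have := h 0; simpa using this

lemma Good.nz2 {μ : ℂ} (h : Good μ) : μ + 2 ≠ 0 := by
  have := h 1; push_cast at this; intro hc; apply this; linear_combination hc

lemma Good.nzc {μ : ℂ} (h : Good μ) (m : ℕ) : (m:ℂ) + 2 + μ ≠ 0 := by
  have := h (m+1); push_cast at this; intro hc; apply this; linear_combination hc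

/-- Kishore recurrence for `a k = sig μ (k+1)`. -/
lemma sig_cv (μ : ℂ) (h : Good μ) (m : ℕ) :
    ((m:ℂ) + 2 + μ) * sig μ (m+2) = cv (fun k => sig μ (k+1)) (fun k => sig μ (k+1)) m := by
  rw [sig]
  rw [Finset.sum_attach (Finset.range (m+1)) (fun j => sig μ (j+1) * sig μ (m+1-j))]
  rw [mul_div_cancel₀ _ (h.nzc m)]
  apply Finset.sum_congr rfl
  intro k hk
  rw [Finset.mem_range] at hk
  congr 2
  omega

/-- the cross identity (**) -/
lemma key (μ : ℂ) (h : Good μ) : ∀ m : ℕ,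
    (μ+1) * sig μ (m+1) = if m = 0 then 1/4 else
      cv (fun k => sig μ (k+1)) (fun k => sig (μ+1) (k+1)) (m-1) := by
  set a : ℕ → ℂ := fun k => sig μ (k+1) with ha
  set b : ℕ → ℂ := fun k => sig (μ+1) (k+1) with hb
  have ha0 : (μ+1) * a 0 = 1/4 := by
    show (μ+1) * sig μ 1 = 1/4
    have hz := h.nz1
    rw [sig_one]; field_simp
  have hb0 : (μ+2) * b 0 = 1/4 := by
    show (μ+2) * sig (μ+1) 1 = 1/4
    rw [sig_one]
    have hz := h.nz2
    have : μ + 1 + 1 = μ + 2 := by ring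
    rw [this]; field_simp
  have hA : ∀ m : ℕ, ((m:ℂ) + 2 + μ) * a (m+1) = cv a a m := fun m => sig_cv μ h m
  have hB : ∀ m : ℕ, ((m:ℂ) + 3 + μ) * b (m+1) = cv b b m := by
    intro m
    have := sig_cv (μ+1) h.succ m
    calc ((m:ℂ) + 3 + μ) * b (m+1) = ((m:ℂ) + 2 + (μ+1)) * b (m+1) := by ring
      _ = cv b b m := this
  -- main claim by strong induction
  suffices H : ∀ m : ℕ, (μ+1) * a (m+1) = cv a b m by
    intro m
    match m with
    | 0 => simpa using ha0
    | (m+1) => simpa using H m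
  intro m
  induction m using Nat.strong_induction_on with
  | _ m IH =>
    match m with
    | 0 =>
      -- (μ+1) a 1 = a0 b0
      apply mul_left_cancel₀ h.nz2
      have h0 := hA 0
      have e0 : cv a a 0 = a 0 * a 0 := by simp [cv]
      have e1 : cv a b 0 = a 0 * b 0 := by simp [cv]
      rw [e1]
      calc (μ+2) * ((μ+1) * a 1) = (μ+1) * (((0:ℕ):ℂ) + 2 + μ) * a 1 := by push_cast; ring
        _ = (μ+1) * (a 0 * a 0) := by rw [mul_assoc, h0, e0]
        _ = ((μ+1) * a 0) * a 0 := by ring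
        _ = (1/4) * a 0 := by rw [ha0]
        _ = ((μ+2) * b 0) * a 0 := by rw [hb0]
        _ = (μ+2) * (a 0 * b 0) := by ring
    | (m+1) =>
      have E1 : (μ+1) * cv a a (m+1) = a (m+1)/4 + cv a (cv a b) m := by
        rw [cv, Finset.mul_sum, Finset.sum_range_succ]
        have last : a (m+1) * ((μ+1) * a (m+1-(m+1))) = a (m+1)/4 := by
          simp only [Nat.sub_self]; rw [ha0]; ring
        have rest : ∀ k ∈ range (m+1), (μ+1) * (a k * a (m+1-k)) = a k * cv a b (m-k) := by
          intro k hk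
          rw [Finset.mem_range] at hk
          have : m+1-k = (m-k)+1 := by omega
          rw [this, ← mul_assoc, mul_comm (μ+1) (a k), mul_assoc, IH (m-k) (by omega)]
        rw [Finset.sum_congr rfl rest]
        have : a (m+1) * ((μ+1) * a (m+1-(m+1))) = (μ+1) * (a (m+1) * a (m+1-(m+1))) := by ring
        rw [← this, last]
        rw [cv]; ring
      have E2 : (μ+1) * cv a b (m+1) = b (m+1)/4 + cv (cv a b) b m := by
        rw [cv, Finset.mul_sum, Finset.sum_range_succ']
        have first : (μ+1) * (a 0 * b (m+1-0)) = b (m+1)/4 := by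
          rw [← mul_assoc, ha0]; simp; ring
        have rest : ∀ k ∈ range (m+1), (μ+1) * (a (k+1) * b (m+1-(k+1))) =
            cv a b k * b (m-k) := by
          intro k hk
          rw [Finset.mem_range] at hk
          have : m+1-(k+1) = m-k := by omega
          rw [this, ← mul_assoc, IH k (by omega)]
        rw [Finset.sum_congr rfl rest, first]
        rw [cv]; ring
      have hcast : ∀ k, k ∈ range (m+2) → ((m:ℂ)+3+μ) * (a k * b (m+1-k)) =
          (((k:ℂ)+1+μ) * a k) * b (m+1-k) + a k * ((((m+1-k:ℕ):ℂ)+2+μ) * b (m+1-k))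
            - (μ+1) * (a k * b (m+1-k)) := by
        intro k hk
        rw [Finset.mem_range] at hk
        have : ((m+1-k:ℕ):ℂ) = (m:ℂ)+1-(k:ℂ) := by
          push_cast [Nat.cast_sub (by omega : k ≤ m+1)]; ring
        rw [this]; ring
      have S1 : ∑ k ∈ range (m+2), (((k:ℂ)+1+μ) * a k) * b (m+1-k)
          = b (m+1)/4 + cv (cv a a) b m := by
        rw [Finset.sum_range_succ']
        have first : (((0:ℕ):ℂ)+1+μ) * a 0 * b (m+1-0) = b (m+1)/4 := by
          push_cast
          have : ((0:ℂ)+1+μ) * a 0 = (μ+1) * a 0 := by ring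
          rw [this, ha0]; simp; ring
        have rest : ∀ k ∈ range (m+1), (((k+1:ℕ):ℂ)+1+μ) * a (k+1) * b (m+1-(k+1)) =
            cv a a k * b (m-k) := by
          intro k hk
          have h1 : m+1-(k+1) = m-k := by omega
          have h2 : (((k+1:ℕ):ℂ)+1+μ) = ((k:ℂ)+2+μ) := by push_cast; ring
          rw [h1, h2, hA k]
        rw [Finset.sum_congr rfl rest, first]
        rw [cv]; ring
      have S2 : ∑ k ∈ range (m+2), a k * ((((m+1-k:ℕ):ℂ)+2+μ) * b (m+1-k))
          = a (m+1)/4 + cv a (cv b b) m := by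
        rw [Finset.sum_range_succ]
        have last : a (m+1) * ((((m+1-(m+1):ℕ):ℂ)+2+μ) * b (m+1-(m+1))) = a (m+1)/4 := by
          simp only [Nat.sub_self]
          have : (((0:ℕ):ℂ)+2+μ) * b 0 = (μ+2) * b 0 := by push_cast; ring
          rw [this, hb0]; ring
        have rest : ∀ k ∈ range (m+1), a k * ((((m+1-k:ℕ):ℂ)+2+μ) * b (m+1-k)) =
            a k * cv b b (m-k) := by
          intro k hk
          rw [Finset.mem_range] at hk
          have h1 : m+1-k = (m-k)+1 := by omega
          have h2 : (((m-k+1:ℕ):ℂ)+2+μ) = (((m-k:ℕ):ℂ)+3+μ) := by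
            push_cast; ring
          rw [h1, h2, hB (m-k)]
        rw [Finset.sum_congr rfl rest, last]
        rw [cv]; ring
      have E3 : ((m:ℂ)+3+μ) * cv a b (m+1) = cv (cv a a) b m + a (m+1)/4 := by
        have expand : ((m:ℂ)+3+μ) * cv a b (m+1)
            = ∑ k ∈ range (m+2), ((m:ℂ)+3+μ) * (a k * b (m+1-k)) := by
          rw [cv, Finset.mul_sum]
        rw [expand, Finset.sum_congr rfl hcast, Finset.sum_sub_distrib,
          Finset.sum_add_distrib, S1, S2]
        have : ∑ k ∈ range (m+2), (μ+1) * (a k * b (m+1-k)) = (μ+1) * cv a b (m+1) := by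
          rw [cv, Finset.mul_sum]
        rw [this, E2]
        have assoc2 : cv a (cv b b) m = cv (cv a b) b m := by
          rw [cv_assoc]
        rw [assoc2]; ring
      -- conclude
      have hAm := hA (m+1)
      have hcoef : (((m+1:ℕ):ℂ)+2+μ) = ((m:ℂ)+3+μ) := by push_cast; ring
      rw [hcoef] at hAm
      have hcc : (m:ℂ)+3+μ ≠ 0 := by
        have := h.nzc (m+1); push_cast at this ⊢; intro hc; apply this; linear_combination hc
      apply mul_left_cancel₀ hcc
      calc ((m:ℂ)+3+μ) * ((μ+1) * a (m+1+1)) = (μ+1) * (((m:ℂ)+3+μ) * a (m+2)) := by ring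
        _ = (μ+1) * cv a a (m+1) := by rw [hAm]
        _ = a (m+1)/4 + cv a (cv a b) m := E1
        _ = a (m+1)/4 + cv (cv a a) b m := by rw [← cv_assoc]
        _ = ((m:ℂ)+3+μ) * cv a b (m+1) := by rw [E3]; ring

-- helper sum lemmas
lemma sum_range_ite_le' (N j : ℕ) (f : ℕ → ℂ) :
    ∑ k ∈ range N, (if j ≤ k then f k else 0) = ∑ k ∈ range (N - j), f (j + k) := by
  have h1 : ∑ k ∈ range N, (if j ≤ k then f k else 0)
      = ∑ k ∈ range N, (if k ∈ Ico j N then f k else 0) := by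
    apply sum_congr rfl
    intro k hk
    rw [mem_range] at hk
    by_cases h : j ≤ k
    · simp [h, mem_Ico, hk]
    · simp [h, mem_Ico]
  rw [h1, Finset.sum_ite_mem, Finset.inter_eq_right.mpr, Finset.sum_Ico_eq_sum_range]
  intro x hx
  rw [mem_Ico] at hx
  rw [mem_range]
  omega

lemma sum_range_ite_le (n i : ℕ) (hi : i < n) (f : ℕ → ℂ) :
    ∑ k ∈ range n, (if k ≤ i then f k else 0) = ∑ k ∈ range (i+1), f k := by
  have h1 : ∑ k ∈ range n, (if k ≤ i then f k else 0)
      = ∑ k ∈ range n, (if k ∈ range (i+1) then f k else 0) := by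
    apply sum_congr rfl
    intro k _
    by_cases h : k ≤ i
    · simp [h, mem_range, Nat.lt_succ_of_le h]
    · simp [h, mem_range, show ¬ (k < i+1) by omega]
  rw [h1, Finset.sum_ite_mem, Finset.inter_eq_right.mpr]
  intro x hx
  rw [mem_range] at hx ⊢
  omega

section hankel
variable (Cf Bf Df : ℕ → ℂ)

-- abstract hypotheses
def HypBC : Prop := ∀ N : ℕ, Cf (N+1) = ∑ q ∈ range (N+1), Bf (N-q) * Cf q

lemma lemA (hBC : HypBC Cf Bf) (i j : ℕ) :
    ∑ k ∈ range (i+1), Cf (i-k) * Bf (k+j)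
      + ∑ l ∈ range j, Cf (i+l+1) * Bf (j-1-l) = Cf (i+j+1) := by
  have e := Finset.sum_range_add (fun q => Bf (i+j-q) * Cf q) (i+1) j
  rw [hBC (i+j), show i+j+1 = (i+1)+j by omega, e]
  congr 1
  · rw [← Finset.sum_range_reflect (fun q => Bf (i+j-q) * Cf q) (i+1)]
    apply sum_congr rfl
    intro k hk
    rw [mem_range] at hk
    have h1 : i + 1 - 1 - k = i - k := by omega
    have h2 : i + j - (i - k) = k + j := by omega
    rw [h1, h2, mul_comm]
  · apply sum_congr rfl
    intro l hl
    rw [mem_range] at hl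
    have h2 : i + j - (i + 1 + l) = j - 1 - l := by omega
    have h3 : i + 1 + l = i + l + 1 := by omega
    rw [h2, h3, mul_comm]

lemma lemB (hBC : HypBC Cf Bf) (i j : ℕ) :
    ∑ k ∈ range i, Cf (i-1-k) * Bf (k+j+1)
      + ∑ l ∈ range (j+1), Cf (i+l) * Bf (j-l) = Cf (i+j+1) := by
  have e := Finset.sum_range_add (fun q => Bf (i+j-q) * Cf q) i (j+1)
  rw [hBC (i+j), show i+j+1 = i+(j+1) by omega, e]
  congr 1
  · rw [← Finset.sum_range_reflect (fun q => Bf (i+j-q) * Cf q) i]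
    apply sum_congr rfl
    intro k hk
    rw [mem_range] at hk
    have h2 : i + j - (i - 1 - k) = k + j + 1 := by omega
    rw [h2, mul_comm]
  · apply sum_congr rfl
    intro l hl
    rw [mem_range] at hl
    have h2 : i + j - (i + l) = j - l := by omega
    rw [h2, mul_comm]

lemma lemC (hC0 : Cf 0 = 1) (hD0 : Df 0 = 1) (hDs : ∀ m, Df (m+1) = -(Bf m))
    (hBC : HypBC Cf Bf) (N : ℕ) :
    ∑ m ∈ range (N+1), Df (N-m) * Cf m = if N = 0 then 1 else 0 := by
  cases N with
  | zero => simp [hC0, hD0]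
  | succ N =>
    rw [Finset.sum_range_succ]
    have h1 : ∀ m ∈ range (N+1), Df (N+1-m) * Cf m = -(Bf (N-m) * Cf m) := by
      intro m hm
      rw [mem_range] at hm
      rw [show N+1-m = (N-m)+1 by omega, hDs]
      ring
    rw [Finset.sum_congr rfl h1, Nat.sub_self, hD0, Finset.sum_neg_distrib, ← hBC N]
    simp
end hankel


lemma sum_range_ite_lt (N i : ℕ) (hi : i ≤ N) (f : ℕ → ℂ) :
    ∑ k ∈ range N, (if k < i then f k else 0) = ∑ k ∈ range i, f k := by
  have h1 : ∑ k ∈ range N, (if k < i then f k else 0)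
      = ∑ k ∈ range N, (if k ∈ range i then f k else 0) := by
    apply sum_congr rfl
    intro k _
    by_cases h : k < i
    · simp [h, mem_range]
    · simp [h, mem_range]
  rw [h1, Finset.sum_ite_mem, Finset.inter_eq_right.mpr]
  intro x hx
  rw [mem_range] at hx ⊢
  omega

section matrices
variable (Cf Bf Df : ℕ → ℂ) (n : ℕ)

noncomputable def TCm : Matrix (Fin n) (Fin n) ℂ :=
  Matrix.of fun i k => if (k:ℕ) ≤ (i:ℕ) then Cf ((i:ℕ)-(k:ℕ)) else 0

lemma M2 (hC0 : Cf 0 = 1) (hD0 : Df 0 = 1) (hDs : ∀ m, Df (m+1) = -(Bf m))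
    (hBC : HypBC Cf Bf) : TCm Df n * TCm Cf n = 1 := by
  ext i j
  rw [Matrix.mul_apply]
  simp only [TCm, Matrix.of_apply, ite_mul, zero_mul, mul_ite, mul_zero]
  have hsw : ∀ x : Fin n, (if (j:ℕ) ≤ (x:ℕ) then if (x:ℕ) ≤ (i:ℕ) then Df ((i:ℕ)-(x:ℕ)) * Cf ((x:ℕ)-(j:ℕ)) else 0 else 0) = (if (x:ℕ) ≤ (i:ℕ) then if (j:ℕ) ≤ (x:ℕ) then Df ((i:ℕ)-(x:ℕ)) * Cf ((x:ℕ)-(j:ℕ)) else 0 else 0) := by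
    intro x; split_ifs <;> rfl
  rw [Finset.sum_congr rfl (fun x _ => hsw x)]
  rw [Fin.sum_univ_eq_sum_range
    (fun k => if k ≤ (i:ℕ) then (if (j:ℕ) ≤ k then Df ((i:ℕ)-k) * Cf (k-(j:ℕ)) else 0) else 0) n]
  rw [sum_range_ite_le n i i.isLt, sum_range_ite_le' ((i:ℕ)+1) (j:ℕ)]
  by_cases hij : (j:ℕ) ≤ (i:ℕ)
  · have h1 : (i:ℕ)+1-(j:ℕ) = ((i:ℕ)-(j:ℕ))+1 := by omega
    have h2 : ∀ k ∈ range (((i:ℕ)-(j:ℕ))+1),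
        Df ((i:ℕ)-((j:ℕ)+k)) * Cf ((j:ℕ)+k-(j:ℕ)) = Df ((i:ℕ)-(j:ℕ)-k) * Cf k := by
      intro k hk
      congr 2 <;> omega
    rw [h1, Finset.sum_congr rfl h2, lemC Cf Bf Df hC0 hD0 hDs hBC]
    rw [Matrix.one_apply]
    by_cases h : i = j
    · simp [h]
    · have : ¬ ((i:ℕ)-(j:ℕ) = 0) := by
        have := Fin.val_ne_of_ne h; omega
      simp [h, this]
  · have h1 : (i:ℕ)+1-(j:ℕ) = 0 := by omega
    have h2 : i ≠ j := by intro hc; apply hij; rw [hc]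
    rw [h1, Matrix.one_apply_ne h2]
    simp

lemma detTC (hC0 : Cf 0 = 1) : (TCm Cf n).det = 1 := by
  have h : (TCm Cf n).BlockTriangular ⇑OrderDual.toDual := by
    intro i j hij
    have : ¬ ((j:ℕ) ≤ (i:ℕ)) := by
      simp only [OrderDual.toDual_lt_toDual] at hij
      exact not_le.mpr hij
    simp only [TCm, Matrix.of_apply, if_neg this]
  rw [Matrix.det_of_lowerTriangular _ h]
  apply Finset.prod_eq_one
  intro i _
  simp [TCm, hC0]

lemma M1 (hC0 : Cf 0 = 1) (hD0 : Df 0 = 1) (hDs : ∀ m, Df (m+1) = -(Bf m))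
    (hBC : HypBC Cf Bf) :
    TCm Cf n * (Matrix.of fun i j : Fin n => Bf ((i:ℕ)+(j:ℕ)))
      = (Matrix.of fun i j : Fin n => Cf ((i:ℕ)+(j:ℕ)+1)) * (TCm Df n)ᵀ := by
  ext i j
  rw [Matrix.mul_apply, Matrix.mul_apply]
  simp only [TCm, Matrix.of_apply, Matrix.transpose_apply, ite_mul, zero_mul, mul_ite, mul_zero]
  rw [Fin.sum_univ_eq_sum_range
    (fun k => if k ≤ (i:ℕ) then Cf ((i:ℕ)-k) * Bf (k+(j:ℕ)) else 0) n]
  rw [Fin.sum_univ_eq_sum_range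
    (fun l => if l ≤ (j:ℕ) then Cf ((i:ℕ)+l+1) * Df ((j:ℕ)-l) else 0) n]
  rw [sum_range_ite_le n i i.isLt, sum_range_ite_le n j j.isLt]
  rw [Finset.sum_range_succ (fun l => Cf ((i:ℕ)+l+1) * Df ((j:ℕ)-l)) (j:ℕ)]
  simp only [Nat.sub_self, hD0, mul_one]
  have h2 : ∀ l ∈ range (j:ℕ), Cf ((i:ℕ)+l+1) * Df ((j:ℕ)-l)
      = -(Cf ((i:ℕ)+l+1) * Bf ((j:ℕ)-1-l)) := by
    intro l hl
    rw [mem_range] at hl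
    rw [show (j:ℕ)-l = ((j:ℕ)-1-l)+1 by omega, hDs]
    ring
  rw [Finset.sum_congr rfl h2]
  have key := lemA Cf Bf hBC (i:ℕ) (j:ℕ)
  rw [Finset.sum_neg_distrib]
  linear_combination key

end matrices

noncomputable def MMm (Bf : ℕ → ℂ) (n : ℕ) : Matrix (Fin n) (Fin n) ℂ :=
  Matrix.of fun k j => if (k:ℕ) = 0 then (if (j:ℕ) = 0 then (1:ℂ) else 0)
    else if (j:ℕ) = 0 then 0 else Bf ((k:ℕ)+(j:ℕ)-1)

lemma M1' (Cf Bf Df : ℕ → ℂ) (n : ℕ) (hD0 : Df 0 = 1)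
    (hDs : ∀ m, Df (m+1) = -(Bf m)) (hBC : HypBC Cf Bf) :
    TCm Cf n * MMm Bf n
      = (Matrix.of fun i j : Fin n => Cf ((i:ℕ)+(j:ℕ))) * (TCm Df n)ᵀ := by
  ext i j
  rw [Matrix.mul_apply, Matrix.mul_apply]
  simp only [TCm, MMm, Matrix.of_apply, Matrix.transpose_apply]
  have hR : (∑ l : Fin n, Cf ((i:ℕ)+(l:ℕ)) * (if (l:ℕ) ≤ (j:ℕ) then Df ((j:ℕ)-(l:ℕ)) else 0))
      = ∑ l ∈ range ((j:ℕ)+1), Cf ((i:ℕ)+l) * Df ((j:ℕ)-l) := by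
    simp only [mul_ite, mul_zero]
    rw [Fin.sum_univ_eq_sum_range
      (fun l => if l ≤ (j:ℕ) then Cf ((i:ℕ)+l) * Df ((j:ℕ)-l) else 0) n]
    exact sum_range_ite_le n j j.isLt _
  rw [hR]
  by_cases hj : (j:ℕ) = 0
  · have hL : ∀ k : Fin n, ((if (k:ℕ) ≤ (i:ℕ) then Cf ((i:ℕ)-(k:ℕ)) else 0)
        * (if (k:ℕ) = 0 then (if (j:ℕ) = 0 then (1:ℂ) else 0)
          else if (j:ℕ) = 0 then 0 else Bf ((k:ℕ)+(j:ℕ)-1)))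
        = (if (k:ℕ) = 0 then Cf (i:ℕ) else 0) := by
      intro k
      by_cases hk : (k:ℕ) = 0
      · have : (k:ℕ) ≤ (i:ℕ) := by omega
        simp [hk, hj, this]
      · by_cases hki : (k:ℕ) ≤ (i:ℕ) <;> simp [hk, hj, hki]
    rw [Finset.sum_congr rfl (fun k _ => hL k)]
    rw [Fin.sum_univ_eq_sum_range (fun k => if k = 0 then Cf (i:ℕ) else 0) n]
    rw [hj]
    have h0n : (0:ℕ) ∈ range n := by rw [mem_range]; exact lt_of_le_of_lt (Nat.zero_le _) i.isLt
    rw [Finset.sum_ite_eq' (range n) 0 (fun _ => Cf (i:ℕ)), if_pos h0n]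
    simp [hD0]
  · obtain ⟨jw, hjw⟩ : ∃ jw, (j:ℕ) = jw + 1 := ⟨(j:ℕ)-1, by omega⟩
    have hL : ∀ k : Fin n, ((if (k:ℕ) ≤ (i:ℕ) then Cf ((i:ℕ)-(k:ℕ)) else 0)
        * (if (k:ℕ) = 0 then (if (j:ℕ) = 0 then (1:ℂ) else 0)
          else if (j:ℕ) = 0 then 0 else Bf ((k:ℕ)+(j:ℕ)-1)))
        = (if 1 ≤ (k:ℕ) then (if (k:ℕ) ≤ (i:ℕ) then
            Cf ((i:ℕ)-(k:ℕ)) * Bf ((k:ℕ)+(j:ℕ)-1) else 0) else 0) := by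
      intro k
      by_cases hk : (k:ℕ) = 0
      · by_cases hki : (k:ℕ) ≤ (i:ℕ) <;> simp [hk, hj, hki]
      · have h1k : 1 ≤ (k:ℕ) := by omega
        by_cases hki : (k:ℕ) ≤ (i:ℕ) <;> simp [hk, hj, hki, h1k]
    rw [Finset.sum_congr rfl (fun k _ => hL k)]
    rw [Fin.sum_univ_eq_sum_range (fun k => if 1 ≤ k then (if k ≤ (i:ℕ) then
      Cf ((i:ℕ)-k) * Bf (k+(j:ℕ)-1) else 0) else 0) n]
    rw [sum_range_ite_le' n 1]
    have hL2 : ∀ k ∈ range (n-1), (if 1+k ≤ (i:ℕ) then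
        Cf ((i:ℕ)-(1+k)) * Bf ((1+k)+(j:ℕ)-1) else 0)
        = (if k < (i:ℕ) then Cf ((i:ℕ)-1-k) * Bf (k+jw+1) else 0) := by
      intro k _
      by_cases hki : 1+k ≤ (i:ℕ)
      · have h1 : k < (i:ℕ) := by omega
        have h2 : (i:ℕ)-(1+k) = (i:ℕ)-1-k := by omega
        have h3 : (1+k)+(j:ℕ)-1 = k+jw+1 := by omega
        rw [if_pos hki, if_pos h1, h2, h3]
      · have h1 : ¬ (k < (i:ℕ)) := by omega
        rw [if_neg hki, if_neg h1]
    rw [Finset.sum_congr rfl hL2]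
    rw [sum_range_ite_lt (n-1) (i:ℕ) (by have := i.isLt; omega)]
    -- now the RHS
    rw [Finset.sum_range_succ (fun l => Cf ((i:ℕ)+l) * Df ((j:ℕ)-l)) (j:ℕ)]
    have hR2 : ∀ l ∈ range (j:ℕ), Cf ((i:ℕ)+l) * Df ((j:ℕ)-l)
        = -(Cf ((i:ℕ)+l) * Bf ((j:ℕ)-1-l)) := by
      intro l hl
      rw [mem_range] at hl
      rw [show (j:ℕ)-l = ((j:ℕ)-1-l)+1 by omega, hDs]
      ring
    rw [Finset.sum_congr rfl hR2, Nat.sub_self, hD0, mul_one, Finset.sum_neg_distrib]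
    have key := lemB Cf Bf hBC (i:ℕ) jw
    have e1 : (j:ℕ) = jw+1 := hjw
    rw [e1]
    have e2 : ∀ l ∈ range (jw+1), Cf ((i:ℕ)+l) * Bf (jw+1-1-l)
        = Cf ((i:ℕ)+l) * Bf (jw-l) := by
      intro l _
      have h4 : jw+1-1-l = jw-l := by omega
      rw [h4]
    rw [Finset.sum_congr rfl e2, show (i:ℕ)+(jw+1) = (i:ℕ)+jw+1 by omega]
    linear_combination key

section assembly
variable (Cf Bf Df : ℕ → ℂ) (n : ℕ)
variable (hC0 : Cf 0 = 1) (hD0 : Df 0 = 1) (hDs : ∀ m, Df (m+1) = -(Bf m))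
  (hBC : HypBC Cf Bf)

lemma sandwich1 (hC0 : Cf 0 = 1) (hD0 : Df 0 = 1) (hDs : ∀ m, Df (m+1) = -(Bf m))
    (hBC : HypBC Cf Bf) :
    (Matrix.of fun i j : Fin n => Cf ((i:ℕ)+(j:ℕ)+1)).det
      = (Matrix.of fun i j : Fin n => Bf ((i:ℕ)+(j:ℕ))).det := by
  have m2 := M2 Cf Bf Df n hC0 hD0 hDs hBC
  have m1 := M1 Cf Bf Df n hC0 hD0 hDs hBC
  have hTD : TCm Cf n * TCm Df n = 1 := mul_eq_one_comm.mpr m2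
  have key : (Matrix.of fun i j : Fin n => Cf ((i:ℕ)+(j:ℕ)+1))
      = TCm Cf n * (Matrix.of fun i j : Fin n => Bf ((i:ℕ)+(j:ℕ))) * (TCm Cf n)ᵀ := by
    rw [m1, Matrix.mul_assoc, ← Matrix.transpose_mul, hTD]
    simp
  rw [key, Matrix.det_mul, Matrix.det_mul, Matrix.det_transpose,
    detTC Cf n hC0]
  ring

lemma sandwich2 (hC0 : Cf 0 = 1) (hD0 : Df 0 = 1) (hDs : ∀ m, Df (m+1) = -(Bf m))
    (hBC : HypBC Cf Bf) :
    (Matrix.of fun i j : Fin n => Cf ((i:ℕ)+(j:ℕ))).det = (MMm Bf n).det := by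
  have m2 := M2 Cf Bf Df n hC0 hD0 hDs hBC
  have m1 := M1' Cf Bf Df n hD0 hDs hBC
  have hTD : TCm Cf n * TCm Df n = 1 := mul_eq_one_comm.mpr m2
  have key : (Matrix.of fun i j : Fin n => Cf ((i:ℕ)+(j:ℕ)))
      = TCm Cf n * MMm Bf n * (TCm Cf n)ᵀ := by
    rw [m1, Matrix.mul_assoc, ← Matrix.transpose_mul, hTD]
    simp
  rw [key, Matrix.det_mul, Matrix.det_mul, Matrix.det_transpose, detTC Cf n hC0]
  ring

lemma detMM (n : ℕ) :
    (MMm Bf (n+1)).det = (Matrix.of fun i j : Fin n => Bf ((i:ℕ)+(j:ℕ)+1)).det := by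
  rw [Matrix.det_succ_column_zero]
  rw [Finset.sum_eq_single 0]
  · have h00 : MMm Bf (n+1) 0 0 = 1 := by simp [MMm]
    rw [h00]
    simp only [Fin.val_zero, pow_zero, one_mul, mul_one]
    congr 1
    ext i j
    simp only [Matrix.submatrix_apply, Fin.succAbove_zero, MMm, Matrix.of_apply,
      Fin.val_succ, Matrix.of_apply]
    have h1 : (i:ℕ)+1 ≠ 0 := by omega
    have h2 : (j:ℕ)+1 ≠ 0 := by omega
    rw [if_neg h1, if_neg h2]
    congr 1
    omega
  · intro b _ hb
    have : MMm Bf (n+1) b 0 = 0 := by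
      have hbv : (b:ℕ) ≠ 0 := by
        intro hc
        apply hb
        exact Fin.ext hc
      simp [MMm, hbv, hb]
    rw [this]
    ring
  · intro h
    exact absurd (Finset.mem_univ 0) h
end assembly

-- concrete sequences
noncomputable def Cfc (μ : ℂ) (m : ℕ) : ℂ := 4*(μ+1)*sig μ (m+1)
noncomputable def Bfc (μ : ℂ) (m : ℕ) : ℂ := sig (μ+1) (m+1) / (μ+1)
noncomputable def Dfc (μ : ℂ) (m : ℕ) : ℂ := if m = 0 then 1 else -(Bfc μ (m-1))

lemma hC0c (μ : ℂ) (h : Good μ) : Cfc μ 0 = 1 := by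
  have := h.nz1
  rw [Cfc, sig_one]
  field_simp

lemma hD0c (μ : ℂ) : Dfc μ 0 = 1 := rfl
lemma hDsc (μ : ℂ) : ∀ m, Dfc μ (m+1) = -(Bfc μ m) := by intro m; rfl

lemma hBCc (μ : ℂ) (h : Good μ) : HypBC (Cfc μ) (Bfc μ) := by
  intro N
  have hk := key μ h (N+1)
  simp only [Nat.add_sub_cancel, if_neg (Nat.succ_ne_zero N)] at hk
  have hnz := h.nz1
  calc Cfc μ (N+1) = 4 * ((μ+1) * sig μ (N+2)) := by rw [Cfc]; ring
    _ = 4 * cv (fun k => sig μ (k+1)) (fun k => sig (μ+1) (k+1)) N := by rw [hk]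
    _ = ∑ q ∈ range (N+1), Bfc μ (N-q) * Cfc μ q := by
        rw [cv, Finset.mul_sum]
        apply Finset.sum_congr rfl
        intro q _
        rw [Bfc, Cfc]
        field_simp

noncomputable def FD (n : ℕ) (μ : ℂ) : ℂ :=
  (Matrix.of fun i j : Fin n => sig μ ((i:ℕ)+(j:ℕ)+2)).det
noncomputable def ED (n : ℕ) (μ : ℂ) : ℂ :=
  (Matrix.of fun i j : Fin n => sig μ ((i:ℕ)+(j:ℕ)+1)).det

lemma step1 (n : ℕ) (μ : ℂ) (h : Good μ) :
    (μ+1)^n * ((4*(μ+1))^n * FD n μ) = ED n (μ+1) := by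
  have s1 := sandwich1 (Cfc μ) (Bfc μ) (Dfc μ) n (hC0c μ h) (hD0c μ) (hDsc μ) (hBCc μ h)
  have e1 : (Matrix.of fun i j : Fin n => Cfc μ ((i:ℕ)+(j:ℕ)+1))
      = (4*(μ+1)) • (Matrix.of fun i j : Fin n => sig μ ((i:ℕ)+(j:ℕ)+2)) := by
    ext i j
    simp only [Matrix.of_apply, Matrix.smul_apply, smul_eq_mul, Cfc]
    try (congr 2 <;> omega)
  have e2 : (Matrix.of fun i j : Fin n => Bfc μ ((i:ℕ)+(j:ℕ)))
      = (μ+1)⁻¹ • (Matrix.of fun i j : Fin n => sig (μ+1) ((i:ℕ)+(j:ℕ)+1)) := by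
    ext i j
    simp only [Matrix.of_apply, Matrix.smul_apply, smul_eq_mul, Bfc]
    rw [div_eq_inv_mul]
  rw [e1, e2, Matrix.det_smul, Matrix.det_smul] at s1
  simp only [Fintype.card_fin] at s1
  have hnz := h.nz1
  unfold FD ED
  rw [s1, ← mul_assoc, ← mul_pow, mul_inv_cancel₀ hnz, one_pow, one_mul]

lemma step2 (n : ℕ) (μ : ℂ) (h : Good μ) :
    (μ+1)^n * ((4*(μ+1))^(n+1) * ED (n+1) μ) = FD n (μ+1) := by
  have s2 := sandwich2 (Cfc μ) (Bfc μ) (Dfc μ) (n+1) (hC0c μ h) (hD0c μ) (hDsc μ) (hBCc μ h)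
  have e1 : (Matrix.of fun i j : Fin (n+1) => Cfc μ ((i:ℕ)+(j:ℕ)))
      = (4*(μ+1)) • (Matrix.of fun i j : Fin (n+1) => sig μ ((i:ℕ)+(j:ℕ)+1)) := by
    ext i j
    simp only [Matrix.of_apply, Matrix.smul_apply, smul_eq_mul, Cfc]
  have e2 : (Matrix.of fun i j : Fin n => Bfc μ ((i:ℕ)+(j:ℕ)+1))
      = (μ+1)⁻¹ • (Matrix.of fun i j : Fin n => sig (μ+1) ((i:ℕ)+(j:ℕ)+2)) := by
    ext i j
    simp only [Matrix.of_apply, Matrix.smul_apply, smul_eq_mul, Bfc]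
    rw [div_eq_inv_mul]
    try (congr 2 <;> omega)
  rw [e1, detMM (Bfc μ) n, e2, Matrix.det_smul, Matrix.det_smul] at s2
  simp only [Fintype.card_fin] at s2
  have hnz := h.nz1
  unfold FD ED
  rw [s2, ← mul_assoc, ← mul_pow, mul_inv_cancel₀ hnz, one_pow, one_mul]

lemma comb (n : ℕ) (μ : ℂ) (h : Good μ) :
    FD n (μ+2) = (μ+2)^n * ((4*(μ+2))^(n+1) *
      ((μ+1)^(n+1) * ((4*(μ+1))^(n+1) * FD (n+1) μ))) := by
  have h1 := step1 (n+1) μ h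
  have h2 := step2 n (μ+1) h.succ
  have e : μ+1+1 = μ+2 := by ring
  rw [e] at h2
  rw [← h2, ← h1]

lemma mainP : ∀ n : ℕ, ∀ μ : ℂ, Good μ →
    (2:ℂ)^(2*n*(n+1)) * (∏ k ∈ range (2*n), (μ+1+(k:ℂ))^(2*n-k)) * FD n μ = 1 := by
  intro n
  induction n with
  | zero =>
    intro μ h
    simp [FD, Matrix.det_fin_zero]
  | succ n IH =>
    intro μ h
    have hg2 : Good (μ+2) := by
      have := h.succ.succ
      rwa [show μ+1+1 = μ+2 by ring] at this
    have hIH := IH (μ+2) hg2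
    rw [comb n μ h] at hIH
    rw [show μ+2+1 = μ+3 by ring] at hIH
    have expand : (∏ k ∈ range (2*(n+1)), (μ+1+(k:ℂ))^(2*(n+1)-k))
        = (∏ k ∈ range (2*n), (μ+3+(k:ℂ))^(2*n-k)) * (μ+2)^(2*n+1) * (μ+1)^(2*n+2) := by
      have h1 : 2*(n+1) = (2*n+1)+1 := by omega
      rw [h1, Finset.prod_range_succ' (fun k => (μ+1+(k:ℂ))^((2*n+1)+1-k)) (2*n+1)]
      rw [Finset.prod_range_succ' (fun k => (μ+1+((k+1:ℕ):ℂ))^((2*n+1)+1-(k+1))) (2*n)]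
      have h2 : ∀ k ∈ range (2*n), (μ+1+((k+1+1:ℕ):ℂ))^((2*n+1)+1-(k+1+1))
          = (μ+3+(k:ℂ))^(2*n-k) := by
        intro k hk
        have e4 : μ+1+((k+1+1:ℕ):ℂ) = μ+3+(k:ℂ) := by push_cast; ring
        have e5 : (2*n+1)+1-(k+1+1) = 2*n-k := by omega
        rw [e4, e5]
      rw [Finset.prod_congr rfl h2]
      have e6 : μ+1+((0+1:ℕ):ℂ) = μ+2 := by push_cast; ring
      have e7 : (2*n+1)+1-(0+1) = 2*n+1 := by omega
      have e8 : μ+1+((0:ℕ):ℂ) = μ+1 := by push_cast; ring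
      have e9 : (2*n+1)+1-0 = 2*n+2 := by omega
      rw [e6, e7, e8, e9]
    rw [expand]
    -- power decompositions
    have p2 : (2:ℂ)^(2*(n+1)*((n+1)+1))
        = 2^(2*n*(n+1)) * (2^(2*(n+1)) * 2^(2*(n+1))) := by
      rw [← pow_add, ← pow_add]; congr 1; ring
    have p4a : ((4:ℂ)*(μ+2))^(n+1) = 2^(2*(n+1)) * (μ+2)^(n+1) := by
      rw [mul_pow]; congr 1
      rw [show (4:ℂ) = 2^2 by norm_num, ← pow_mul]
    have p4b : ((4:ℂ)*(μ+1))^(n+1) = 2^(2*(n+1)) * (μ+1)^(n+1) := by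
      rw [mul_pow]; congr 1
      rw [show (4:ℂ) = 2^2 by norm_num, ← pow_mul]
    have pm2 : ((μ+2):ℂ)^(2*n+1) = (μ+2)^n * (μ+2)^(n+1) := by
      rw [← pow_add]; congr 1; omega
    have pm1 : ((μ+1):ℂ)^(2*n+2) = (μ+1)^(n+1) * (μ+1)^(n+1) := by
      rw [← pow_add]; congr 1; omega
    rw [p4a, p4b] at hIH
    rw [p2, pm2, pm1]
    linear_combination hIH

/-- For `n ≥ 1` and `ν ∉ -ℕ`, the determinant of the `n × n` Hankel matrix `H_n^{(1)}(ν)`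
with `(i,j)`-entry `σ_{2i+2j}(ν)` (for `1 ≤ i,j ≤ n`), where `σ k` stands for the Rayleigh
function `σ_{2k}(ν)` determined by `σ_2(ν) = 1/(4(ν+1))` and Kishore's recurrence
`(k+ν)·σ_{2k}(ν) = Σ_{j=1}^{k-1} σ_{2j}(ν)·σ_{2k-2j}(ν)` for `k ≥ 2`,
equals `2^{-2n(n+1)} · ∏_{k=1}^{2n} (ν+k)^{k-2n-1}`. -/
theorem det_hankel_rayleigh_ell_one (ν : ℂ) (hν : ∀ m : ℕ, ν ≠ -((m : ℂ) + 1))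
    (σ : ℕ → ℂ) (hσ1 : σ 1 = 1 / (4 * (ν + 1)))
    (hσrec : ∀ k : ℕ, 2 ≤ k →
      ((k : ℂ) + ν) * σ k = ∑ j ∈ Finset.Icc 1 (k - 1), σ j * σ (k - j))
    (n : ℕ) (hn : 1 ≤ n) :
    Matrix.det (Matrix.of fun i j : Fin n => σ (i.1 + j.1 + 2)) =
      (2 : ℂ) ^ (-(2 * (n : ℤ) * ((n : ℤ) + 1))) *
        ∏ k ∈ Finset.Icc 1 (2 * n), (ν + (k : ℂ)) ^ ((k : ℤ) - 2 * (n : ℤ) - 1) := by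
  have hgood : Good ν := by
    intro m hc
    exact hν m (by linear_combination hc)
  -- uniqueness
  have huniq : ∀ k : ℕ, 1 ≤ k → σ k = sig ν k := by
    intro k
    induction k using Nat.strong_induction_on with
    | _ k IH =>
      intro hk
      match k, hk with
      | 1, _ => rw [hσ1, sig_one]
      | (m+2), _ =>
        have hrec := hσrec (m+2) (by omega)
        have hcoef : ((m+2:ℕ):ℂ) + ν = (m:ℂ) + 2 + ν := by push_cast; ring
        have hsum : ∑ j ∈ Finset.Icc 1 (m+2-1), σ j * σ (m+2-j)
            = ∑ j ∈ range (m+1), sig ν (j+1) * sig ν (m-j+1) := by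
          have h0 : m+2-1 = m+1 := by omega
          have h1 : Finset.Icc 1 (m+2-1) = Finset.Ico 1 (m+2) := by
            rw [h0, ← Finset.Ico_add_one_right_eq_Icc]; rfl
          rw [h1, Finset.sum_Ico_eq_sum_range]
          apply Finset.sum_congr (by congr 1) 
          intro j hj
          rw [mem_range] at hj
          have e1 : 1 + j = j + 1 := by omega
          have e2 : m + 2 - (j+1) = m - j + 1 := by omega
          rw [e1, e2]
          rw [IH (j+1) (by omega) (by omega), IH (m-j+1) (by omega) (by omega)]
        rw [hsum, hcoef] at hrec
        have hs := sig_cv ν hgood m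
        rw [cv] at hs
        have : ((m:ℂ)+2+ν) * σ (m+2) = ((m:ℂ)+2+ν) * sig ν (m+2) := by
          rw [hrec, hs]
        exact mul_left_cancel₀ (hgood.nzc m) this
  -- rewrite matrix
  have hmat : (Matrix.of fun i j : Fin n => σ (i.1 + j.1 + 2))
      = (Matrix.of fun i j : Fin n => sig ν ((i:ℕ)+(j:ℕ)+2)) := by
    ext i j
    exact huniq _ (by omega)
  have hFD : Matrix.det (Matrix.of fun i j : Fin n => σ (i.1 + j.1 + 2)) = FD n ν := by
    rw [hmat]; rfl
  rw [hFD]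
  have hP := mainP n ν hgood
  have hQnz : (∏ k ∈ range (2*n), (ν+1+(k:ℂ))^(2*n-k)) ≠ 0 := by
    apply Finset.prod_ne_zero_iff.mpr
    intro k _
    apply pow_ne_zero
    have := hgood k
    intro hc
    apply this
    linear_combination hc
  have h2nz : ((2:ℂ)^(2*n*(n+1))) ≠ 0 := by
    apply pow_ne_zero; norm_num
  have hzp : (2:ℂ) ^ (-(2 * (n:ℤ) * ((n:ℤ)+1))) = ((2:ℂ)^(2*n*(n+1)))⁻¹ := by
    rw [← zpow_natCast (2:ℂ) (2*n*(n+1)), ← _root_.zpow_neg]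
    congr 1
    all_goals (push_cast; ring)
  have hprod2 : (∏ k ∈ Finset.Icc 1 (2*n), (ν + (k:ℂ))^((2*n+1-k:ℕ)))
      = ∏ k ∈ range (2*n), (ν+1+(k:ℂ))^(2*n-k) := by
    have h2 : Finset.Icc 1 (2*n) = Finset.Ico 1 (2*n+1) := by rw [Finset.Ico_add_one_right_eq_Icc]
    rw [h2, Finset.prod_Ico_eq_prod_range]
    apply Finset.prod_congr (by congr 1)
    intro k hk
    rw [mem_range] at hk
    have e1 : ν + ((1+k:ℕ):ℂ) = ν+1+(k:ℂ) := by push_cast; ring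
    have e2 : 2*n+1-(1+k) = 2*n-k := by omega
    rw [e1, e2]
  have hprod : (∏ k ∈ Finset.Icc 1 (2*n), (ν + (k:ℂ)) ^ ((k:ℤ) - 2*(n:ℤ) - 1))
      = (∏ k ∈ range (2*n), (ν+1+(k:ℂ))^(2*n-k))⁻¹ := by
    have h1 : ∀ k ∈ Finset.Icc 1 (2*n), (ν + (k:ℂ)) ^ ((k:ℤ) - 2*(n:ℤ) - 1)
        = ((ν + (k:ℂ)) ^ ((2*n+1-k : ℕ)))⁻¹ := by
      intro k hk
      rw [Finset.mem_Icc] at hk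
      rw [← zpow_natCast (ν + (k:ℂ)) (2*n+1-k), ← _root_.zpow_neg]
      congr 1
      have : ((2*n+1-k:ℕ):ℤ) = 2*(n:ℤ)+1-(k:ℤ) := by
        push_cast [Nat.cast_sub (by omega : k ≤ 2*n+1)]
        ring
      rw [this]
      ring
    rw [Finset.prod_congr rfl h1, Finset.prod_inv_distrib, hprod2]
  rw [hzp, hprod]
  have hAnz : (2:ℂ)^(2*n*(n+1)) * (∏ k ∈ range (2*n), (ν+1+(k:ℂ))^(2*n-k)) ≠ 0 :=
    mul_ne_zero h2nz hQnz
  apply mul_left_cancel₀ hAnz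
  rw [← mul_assoc, hP]
  field_simp
end

section
/- For every n ∈ ℕ and every ν ∉ -ℕ, one has det H_{2n+1}(ν-1/2, 0) = 2^{2n+1} · det H_{n+1}^{(0)}(ν) · det H_n^{(1)}(ν). -/
open Finset

lemma sum_Icc_parity (f : ℕ → ℂ) (m : ℕ) :
    ∑ l ∈ Icc 1 (2*m), f l = ∑ j ∈ Icc 1 m, f (2*j-1) + ∑ j ∈ Icc 1 m, f (2*j) := by
  induction m with
  | zero => simp
  | succ m ih =>
    have h1 : ∑ l ∈ Icc 1 (2*(m+1)), f l = ∑ l ∈ Icc 1 (2*m), f l + f (2*m+1) + f (2*m+2) := by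
      rw [show 2*(m+1) = (2*m+1)+1 by ring, Finset.sum_Icc_succ_top (by omega),
        Finset.sum_Icc_succ_top (by omega)]
    rw [h1, ih, Finset.sum_Icc_succ_top (by omega : 1 ≤ m+1),
      Finset.sum_Icc_succ_top (by omega : 1 ≤ m+1),
      show 2*(m+1)-1 = 2*m+1 by omega, show 2*(m+1) = 2*m+2 by ring]
    ring

lemma sum_Icc_top_zero (f : ℕ → ℂ) (m : ℕ) (h0 : f (m+1) = 0) :
    ∑ l ∈ Icc 1 m, f l = ∑ l ∈ Icc 1 (m+1), f l := by
  rw [Finset.sum_Icc_succ_top (by omega), h0, add_zero]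
open Finset


/-- For `n ≥ 1` and `ν ∉ -ℕ`, one has
`det H_{2n+1}(ν-1/2, 0) = 2^{2n+1} · det H_{n+1}^{(0)}(ν) · det H_n^{(1)}(ν)`.
Here `ζ k` denotes `ζ_{ν-1/2}(k)` (with `η = 0`), determined by
`ζ_L(2) = (1/(2L+3))·(1 + η²/(L+1)²)` and
`ζ_L(k+1) = (1/(2L+k+2))·((2η/(L+1))·ζ_L(k) + Σ_{l=1}^{k-2} ζ_L(l+1)·ζ_L(k-l))` for `k ≥ 2`,
the `m × m` Hankel matrix `H_m(L,η)` has `(i,j)`-entry `ζ_L(i+j)`, the `m × m` Hankel matrix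
`H_m^{(ℓ)}(ν)` has `(i,j)`-entry `σ_{2ℓ+2i+2j-2}(ν)`, and `σ k` stands for the Rayleigh
function `σ_{2k}(ν)` determined by `σ_2(ν) = 1/(4(ν+1))` and Kishore's recurrence
`(k+ν)·σ_{2k}(ν) = Σ_{j=1}^{k-1} σ_{2j}(ν)·σ_{2k-2j}(ν)` for `k ≥ 2`. -/
theorem det_hankel_coulomb_odd_factorization (ν : ℂ) (hν : ∀ m : ℕ, ν ≠ -((m : ℂ) + 1))
    (ζ : ℕ → ℂ)
    (hζ2 : ζ 2 = (1 / (2 * (ν - 1/2) + 3)) * (1 + (0 : ℂ) ^ 2 / ((ν - 1/2) + 1) ^ 2))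
    (hζrec : ∀ k : ℕ, 2 ≤ k →
      ζ (k + 1) = (1 / (2 * (ν - 1/2) + (k : ℂ) + 2)) *
        ((2 * (0 : ℂ) / ((ν - 1/2) + 1)) * ζ k +
          ∑ l ∈ Finset.Icc 1 (k - 2), ζ (l + 1) * ζ (k - l)))
    (σ : ℕ → ℂ) (hσ1 : σ 1 = 1 / (4 * (ν + 1)))
    (hσrec : ∀ k : ℕ, 2 ≤ k →
      ((k : ℂ) + ν) * σ k = ∑ j ∈ Finset.Icc 1 (k - 1), σ j * σ (k - j))
    (n : ℕ) (hn : 1 ≤ n) :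
    Matrix.det (Matrix.of fun i j : Fin (2 * n + 1) => ζ (i.1 + j.1 + 2)) =
      2 ^ (2 * n + 1) *
        Matrix.det (Matrix.of fun i j : Fin (n + 1) => σ (i.1 + j.1 + 1)) *
        Matrix.det (Matrix.of fun i j : Fin n => σ (i.1 + j.1 + 2)) := by
  have key : ∀ m : ℕ, ζ (2*m+2) = 2 * σ (m+1) ∧ ζ (2*m+3) = 0 := by
    have hne : ∀ m : ℕ, ((m : ℂ) + 1) + ν ≠ 0 := by
      intro m h
      exact hν m (by linear_combination h)
    intro m
    induction m using Nat.strong_induction_on with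
    | _ m ih =>
    have heven : ζ (2*m+2) = 2 * σ (m+1) := by
      rcases Nat.eq_zero_or_pos m with hm | hm
      · subst hm
        have h1 := hne 0
        have h2 : 2*(ν-1/2)+3 ≠ 0 := fun h => h1 (by push_cast; linear_combination h/2)
        have h3 : 4*(ν+1) ≠ 0 := fun h => h1 (by push_cast; linear_combination h/4)
        have h4 : (2:ℂ)+ν*2 ≠ 0 := fun h => h1 (by push_cast; linear_combination h/2)
        rw [show 2*0+2 = 2 by norm_num, hζ2, hσ1]
        have h5 : (1:ℂ)+ν ≠ 0 := fun h => h1 (by push_cast; linear_combination h)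
        field_simp
        have h6 : ν+1 ≠ 0 := by rwa [add_comm]
        rw [show (2:ℂ)*ν-1+3 = 2*(ν+1) by ring]
        field_simp
        ring
      · have hk := hζrec (2*m+1) (by omega)
        have hsum : ∑ l ∈ Icc 1 (2*m+1-2), ζ (l+1) * ζ (2*m+1-l)
            = 4 * (((m+1 : ℕ) : ℂ) + ν) * σ (m+1) := by
          have e1 : (2*m+1-2 : ℕ) = 2*m-1 := by omega
          rw [e1]
          have hextf : ζ (2*m-1+1+1) * ζ (2*m+1-(2*m-1+1)) = 0 := by
            have : (2*m-1+1+1 : ℕ) = 2*(m-1)+3 := by omega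
            rw [this, (ih (m-1) (by omega)).2, zero_mul]
          have e2 : (2*m-1+1 : ℕ) = 2*m := by omega
          rw [sum_Icc_top_zero _ _ hextf, e2, sum_Icc_parity]
          have h1 : ∀ j ∈ Icc 1 m, ζ (2*j-1+1) * ζ (2*m+1-(2*j-1)) = 4 * (σ j * σ (m+1-j)) := by
            intro j hj
            simp only [mem_Icc] at hj
            rw [show 2*j-1+1 = 2*(j-1)+2 by omega, show 2*m+1-(2*j-1) = 2*(m-j)+2 by omega,
              (ih (j-1) (by omega)).1, (ih (m-j) (by omega)).1,
              show j-1+1 = j by omega, show m-j+1 = m+1-j by omega]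
            ring
          have h2 : ∀ j ∈ Icc 1 m, ζ (2*j+1) * ζ (2*m+1-2*j) = 0 := by
            intro j hj
            simp only [mem_Icc] at hj
            rw [show 2*j+1 = 2*(j-1)+3 by omega, (ih (j-1) (by omega)).2, zero_mul]
          rw [Finset.sum_congr rfl h1, Finset.sum_congr rfl h2, Finset.sum_const_zero, add_zero,
            ← Finset.mul_sum]
          have := hσrec (m+1) (by omega)
          rw [show m+1-1 = m by omega] at this
          rw [← this]
          ring
        rw [show 2*m+2 = 2*m+1+1 by ring, hk, hsum]
        have h1 := hne m
        push_cast at h1 ⊢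
        have h2 : 2 * (ν - 1/2) + (2*(m:ℂ)+1) + 2 = 2 * (((m:ℂ)+1) + ν) := by ring
        rw [h2]
        field_simp
        ring
    refine ⟨heven, ?_⟩
    have hk := hζrec (2*m+2) (by omega)
    have hsum : ∑ l ∈ Icc 1 (2*m+2-2), ζ (l+1) * ζ (2*m+2-l) = 0 := by
      rw [show (2*m+2-2 : ℕ) = 2*m by omega, sum_Icc_parity]
      have h1 : ∀ j ∈ Icc 1 m, ζ (2*j-1+1) * ζ (2*m+2-(2*j-1)) = 0 := by
        intro j hj
        simp only [mem_Icc] at hj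
        rw [show 2*m+2-(2*j-1) = 2*(m-j)+3 by omega, (ih (m-j) (by omega)).2, mul_zero]
      have h2 : ∀ j ∈ Icc 1 m, ζ (2*j+1) * ζ (2*m+2-2*j) = 0 := by
        intro j hj
        simp only [mem_Icc] at hj
        rw [show 2*j+1 = 2*(j-1)+3 by omega, (ih (j-1) (by omega)).2, zero_mul]
      rw [Finset.sum_congr rfl h1, Finset.sum_congr rfl h2, Finset.sum_const_zero, add_zero]
    rw [show 2*m+3 = 2*m+2+1 by ring, hk, hsum]
    ring
  let e : Fin (n+1) ⊕ Fin n ≃ Fin (2*n+1) :=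
    { toFun := Sum.elim (fun a => ⟨2*a.1, by have := a.2; omega⟩)
        (fun a => ⟨2*a.1+1, by have := a.2; omega⟩)
      invFun := fun i => if h : i.1 % 2 = 0 then Sum.inl ⟨i.1/2, by have := i.2; omega⟩
        else Sum.inr ⟨i.1/2, by have := i.2; omega⟩
      left_inv := by
        rintro (a | a)
        · show (if h : (2 * a.1) % 2 = 0 then _ else _) = _
          rw [dif_pos (by omega)]
          congr 1
          exact Fin.ext (by simp)
        · show (if h : (2 * a.1 + 1) % 2 = 0 then _ else _) = _
          rw [dif_neg (by omega)]
          congr 1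
          exact Fin.ext (by simp; omega)
      right_inv := by
        intro i
        by_cases h : i.1 % 2 = 0
        · simp only [dif_pos h, Sum.elim_inl]
          exact Fin.ext (by simp; omega)
        · simp only [dif_neg h, Sum.elim_inr]
          exact Fin.ext (by simp; omega) }
  rw [← Matrix.det_submatrix_equiv_self e]
  have hblock : (Matrix.of fun i j : Fin (2*n+1) => ζ (i.1 + j.1 + 2)).submatrix e e =
      Matrix.fromBlocks ((2:ℂ) • Matrix.of fun a b : Fin (n+1) => σ (a.1+b.1+1)) 0 0
        ((2:ℂ) • Matrix.of fun a b : Fin n => σ (a.1+b.1+2)) := by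
    ext i j
    rcases i with a | a <;> rcases j with b | b <;>
      simp only [Matrix.submatrix_apply, Matrix.fromBlocks_apply₁₁, Matrix.fromBlocks_apply₁₂,
        Matrix.fromBlocks_apply₂₁, Matrix.fromBlocks_apply₂₂, Matrix.of_apply,
        Matrix.smul_apply, Matrix.zero_apply, smul_eq_mul, e, Equiv.coe_fn_mk,
        Sum.elim_inl, Sum.elim_inr]
    · rw [show 2*a.1 + 2*b.1 + 2 = 2*(a.1+b.1)+2 by ring, (key (a.1+b.1)).1]
    · rw [show 2*a.1 + (2*b.1+1) + 2 = 2*(a.1+b.1)+3 by ring, (key (a.1+b.1)).2]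
    · rw [show 2*a.1+1 + 2*b.1 + 2 = 2*(a.1+b.1)+3 by ring, (key (a.1+b.1)).2]
    · rw [show 2*a.1+1 + (2*b.1+1) + 2 = 2*(a.1+b.1+1)+2 by ring, (key (a.1+b.1+1)).1]
  rw [hblock, Matrix.det_fromBlocks_zero₁₂, Matrix.det_smul, Matrix.det_smul]
  simp only [Fintype.card_fin]
  ring
end

section
/- For every n ∈ ℕ and every ν ∉ -ℕ, one has det H_{2n}(ν-1/2, 0) = 2^{2n} · det H_n^{(0)}(ν) · det H_n^{(1)}(ν). -/
def interEquiv (n : ℕ) : Fin n ⊕ Fin n ≃ Fin (2 * n) where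
  toFun x := x.elim (fun i => ⟨2 * i.1, by have := i.isLt; omega⟩) (fun i => ⟨2 * i.1 + 1, by have := i.isLt; omega⟩)
  invFun k := if k.1 % 2 = 0 then Sum.inl ⟨k.1 / 2, by have := k.isLt; omega⟩ else Sum.inr ⟨k.1 / 2, by have := k.isLt; omega⟩
  left_inv := by
    rintro (⟨i, hi⟩ | ⟨i, hi⟩)
    · simp only [Sum.elim_inl]
      simp only [show 2 * i % 2 = 0 by omega, ↓reduceIte]
      simp only [Sum.inl.injEq]
      ext
      simp only []
      omega
    · simp only [Sum.elim_inr]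
      simp only [show ¬ ((2 * i + 1) % 2 = 0) by omega, ↓reduceIte]
      simp only [Sum.inr.injEq]
      ext
      simp only []
      omega
  right_inv := by
    rintro ⟨k, hk⟩
    dsimp only
    by_cases h : k % 2 = 0
    · rw [if_pos h]
      simp only [Sum.elim_inl]
      ext
      simp only []
      omega
    · rw [if_neg h]
      simp only [Sum.elim_inr]
      ext
      simp only []
      omega


/-- For `n ≥ 1` and `ν ∉ -ℕ`, one has
`det H_{2n}(ν-1/2, 0) = 2^{2n} · det H_n^{(0)}(ν) · det H_n^{(1)}(ν)`.
Here `ζ k` denotes `ζ_{ν-1/2}(k)` (with `η = 0`), determined by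
`ζ_L(2) = (1/(2L+3))·(1 + η²/(L+1)²)` and
`ζ_L(k+1) = (1/(2L+k+2))·((2η/(L+1))·ζ_L(k) + Σ_{l=1}^{k-2} ζ_L(l+1)·ζ_L(k-l))` for `k ≥ 2`,
the `m × m` Hankel matrix `H_m(L,η)` has `(i,j)`-entry `ζ_L(i+j)`, the `m × m` Hankel matrix
`H_m^{(ℓ)}(ν)` has `(i,j)`-entry `σ_{2ℓ+2i+2j-2}(ν)`, and `σ k` stands for the Rayleigh
function `σ_{2k}(ν)` determined by `σ_2(ν) = 1/(4(ν+1))` and Kishore's recurrence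
`(k+ν)·σ_{2k}(ν) = Σ_{j=1}^{k-1} σ_{2j}(ν)·σ_{2k-2j}(ν)` for `k ≥ 2`. -/
theorem det_hankel_coulomb_even_factorization (ν : ℂ) (hν : ∀ m : ℕ, ν ≠ -((m : ℂ) + 1))
    (ζ : ℕ → ℂ)
    (hζ2 : ζ 2 = (1 / (2 * (ν - 1/2) + 3)) * (1 + (0 : ℂ) ^ 2 / ((ν - 1/2) + 1) ^ 2))
    (hζrec : ∀ k : ℕ, 2 ≤ k →
      ζ (k + 1) = (1 / (2 * (ν - 1/2) + (k : ℂ) + 2)) *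
        ((2 * (0 : ℂ) / ((ν - 1/2) + 1)) * ζ k +
          ∑ l ∈ Finset.Icc 1 (k - 2), ζ (l + 1) * ζ (k - l)))
    (σ : ℕ → ℂ) (hσ1 : σ 1 = 1 / (4 * (ν + 1)))
    (hσrec : ∀ k : ℕ, 2 ≤ k →
      ((k : ℂ) + ν) * σ k = ∑ j ∈ Finset.Icc 1 (k - 1), σ j * σ (k - j))
    (n : ℕ) (hn : 1 ≤ n) :
    Matrix.det (Matrix.of fun i j : Fin (2 * n) => ζ (i.1 + j.1 + 2)) =
      2 ^ (2 * n) *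
        Matrix.det (Matrix.of fun i j : Fin n => σ (i.1 + j.1 + 1)) *
        Matrix.det (Matrix.of fun i j : Fin n => σ (i.1 + j.1 + 2)) := by
  -- odd ζ vanish
  have hzodd : ∀ m : ℕ, ζ (2 * m + 3) = 0 := by
    intro m
    induction m using Nat.strong_induction_on with
    | _ m ih =>
      have h := hζrec (2 * m + 2) (by omega)
      have hsum : ∑ l ∈ Finset.Icc 1 (2 * m + 2 - 2), ζ (l + 1) * ζ (2 * m + 2 - l) = 0 := by
        apply Finset.sum_eq_zero
        intro l hl
        simp only [Finset.mem_Icc] at hl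
        rcases Nat.even_or_odd l with he | ho
        · obtain ⟨a, ha⟩ := he
          have hz : ζ (l + 1) = 0 := by
            have := ih (a - 1) (by omega)
            convert this using 2
            omega
          rw [hz, zero_mul]
        · obtain ⟨a, ha⟩ := ho
          have hz : ζ (2 * m + 2 - l) = 0 := by
            have := ih (m - a - 1) (by omega)
            convert this using 2
            omega
          rw [hz, mul_zero]
      have : (2 * m + 2 + 1 : ℕ) = 2 * m + 3 := by omega
      rw [this] at h
      rw [h, hsum]
      simp
  -- even ζ = 2 σ
  have hzeven : ∀ m : ℕ, 1 ≤ m → ζ (2 * m) = 2 * σ m := by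
    intro m
    induction m using Nat.strong_induction_on with
    | _ m ih =>
      intro hm1
      rcases eq_or_lt_of_le hm1 with h1 | h2
      · -- m = 1
        have h1' : ν + 1 ≠ 0 := by
          have := hν 0
          intro hc
          apply this
          push_cast
          linear_combination hc
        rw [← h1]
        norm_num at hζ2
        rw [show (2*1 : ℕ) = 2 from rfl, hζ2, hσ1]
        have h2ν : (2 : ℂ) + ν * 2 ≠ 0 := by
          intro hc; apply h1'; linear_combination hc / 2
        field_simp [h2ν]
        rw [div_eq_iff (by intro hc; apply h1'; linear_combination hc / 2 : 2 * ν - 1 + 3 ≠ 0)]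
        ring
      · -- m ≥ 2
        have hm2 : 2 ≤ m := h2
        have key := hζrec (2 * m - 1) (by omega)
        have e1 : (2 * m - 1 + 1 : ℕ) = 2 * m := by omega
        rw [e1] at key
        have e2 : (2 * m - 1 - 2 : ℕ) = 2 * m - 3 := by omega
        rw [e2] at key
        have hsum : ∑ l ∈ Finset.Icc 1 (2 * m - 3), ζ (l + 1) * ζ (2 * m - 1 - l)
            = ∑ j ∈ Finset.Icc 1 (m - 1), (2 * σ j) * (2 * σ (m - j)) := by
          rw [← Finset.sum_filter_of_ne (p := fun l => l % 2 = 1)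
            (by
              intro l hl hne
              simp only [Finset.mem_Icc] at hl
              by_contra hpar
              apply hne
              have hle : l % 2 = 0 := by omega
              obtain ⟨a, ha⟩ := (Nat.even_iff.mpr hle)
              have hz : ζ (l + 1) = 0 := by
                have := hzodd (a - 1)
                convert this using 2
                omega
              rw [hz, zero_mul])]
          apply Finset.sum_nbij' (i := fun l => (l + 1) / 2) (j := fun j => 2 * j - 1)
          · intro l hl
            simp only [Finset.mem_filter, Finset.mem_Icc] at hl
            simp only [Finset.mem_Icc]
            omega
          · intro j hj
            simp only [Finset.mem_Icc] at hj
            simp only [Finset.mem_filter, Finset.mem_Icc]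
            omega
          · intro l hl
            simp only [Finset.mem_filter, Finset.mem_Icc] at hl
            omega
          · intro j hj
            simp only [Finset.mem_Icc] at hj
            omega
          · intro l hl
            simp only [Finset.mem_filter, Finset.mem_Icc] at hl
            have h1 : ζ (l + 1) = 2 * σ ((l + 1) / 2) := by
              have := ih ((l + 1) / 2) (by omega) (by omega)
              convert this using  2
              omega
            have h2 : ζ (2 * m - 1 - l) = 2 * σ (m - (l + 1) / 2) := by
              have := ih (m - (l + 1) / 2) (by omega) (by omega)
              convert this using 2
              omega
            rw [h1, h2]
        rw [hsum] at key
        have hks : ∑ j ∈ Finset.Icc 1 (m - 1), (2 * σ j) * (2 * σ (m - j))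
            = 4 * (((m : ℂ) + ν) * σ m) := by
          rw [hσrec m hm2, Finset.mul_sum]
          apply Finset.sum_congr rfl
          intro j hj
          ring
        rw [hks] at key
        have hcast : ((2 * m - 1 : ℕ) : ℂ) = 2 * (m : ℂ) - 1 := by
          push_cast [Nat.cast_sub (by omega : 1 ≤ 2 * m)]
          ring
        rw [hcast] at key
        have hden : 2 * (ν - 1/2) + (2 * (m : ℂ) - 1) + 2 ≠ 0 := by
          have := hν (m - 1)
          have hc : ((m - 1 : ℕ) : ℂ) = (m : ℂ) - 1 := by
            push_cast [Nat.cast_sub (by omega : 1 ≤ m)]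
            ring
          intro hcon
          apply this
          rw [hc]
          have : ν = -(m : ℂ) := by linear_combination hcon / 2
          rw [this]; ring
        simp only [mul_zero, zero_mul, zero_div, zero_add] at key
        have hden2 : ((m : ℂ) + ν) ≠ 0 := by
          intro hc
          apply hden
          linear_combination 2 * hc
        rw [key]
        rw [show 2 * (ν - 1/2) + (2 * (m : ℂ) - 1) + 2 = 2 * ((m : ℂ) + ν) by ring]
        field_simp
        ring
  -- matrix part
  have hdet := Matrix.det_submatrix_equiv_self (interEquiv n)
    (Matrix.of fun i j : Fin (2 * n) => ζ (i.1 + j.1 + 2))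
  rw [← hdet]
  have hb : (Matrix.of fun i j : Fin (2 * n) => ζ (i.1 + j.1 + 2)).submatrix
        (interEquiv n) (interEquiv n)
      = Matrix.fromBlocks
          ((2 : ℂ) • Matrix.of fun i j : Fin n => σ (i.1 + j.1 + 1)) 0 0
          ((2 : ℂ) • Matrix.of fun i j : Fin n => σ (i.1 + j.1 + 2)) := by
    ext x y
    rcases x with a | a <;> rcases y with b | b <;>
      simp only [Matrix.submatrix_apply, Matrix.of_apply, interEquiv, Equiv.coe_fn_mk,
        Sum.elim_inl, Sum.elim_inr, Matrix.fromBlocks_apply₁₁, Matrix.fromBlocks_apply₁₂,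
        Matrix.fromBlocks_apply₂₁, Matrix.fromBlocks_apply₂₂, Matrix.smul_apply, smul_eq_mul,
        Matrix.zero_apply]
    · rw [show 2 * a.1 + 2 * b.1 + 2 = 2 * (a.1 + b.1 + 1) by ring]
      exact hzeven _ (by omega)
    · rw [show 2 * a.1 + (2 * b.1 + 1) + 2 = 2 * (a.1 + b.1) + 3 by ring]
      exact hzodd _
    · rw [show 2 * a.1 + 1 + 2 * b.1 + 2 = 2 * (a.1 + b.1) + 3 by ring]
      exact hzodd _
    · rw [show 2 * a.1 + 1 + (2 * b.1 + 1) + 2 = 2 * (a.1 + b.1 + 2) by ring]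
      exact hzeven _ (by omega)
  rw [hb, Matrix.det_fromBlocks_zero₁₂, Matrix.det_smul, Matrix.det_smul]
  simp only [Fintype.card_fin, smul_eq_mul]
  rw [show 2 * n = n + n by ring, pow_add]
  ring
end

section
/- For every n ∈ ℕ, the determinant of the n×n matrix with (i,j)-entry B_{2i+2j}/(2i+2j)! (Bernoulli numbers) equals (-1)^n · 2^{-n(4n+3)} · ∏_{k=1}^{2n} (k+1/2)^{k-2n-1}. -/
open PowerSeries Finset

noncomputable section HankelBernoulli

namespace HankelBernoulli

/-- `∏_{i<m} (s+2i)` as a rational. -/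
def Pi2 (s m : ℕ) : ℚ := ∏ i ∈ Finset.range m, ((s : ℚ) + 2 * i)

lemma Pi2_zero (s : ℕ) : Pi2 s 0 = 1 := by simp [Pi2]

lemma Pi2_succ (s m : ℕ) : Pi2 s (m + 1) = Pi2 s m * ((s : ℚ) + 2 * m) := by
  simp [Pi2, Finset.prod_range_succ]

lemma Pi2_succ' (s m : ℕ) : Pi2 s (m + 1) = (s : ℚ) * Pi2 (s + 2) m := by
  rw [Pi2, Finset.prod_range_succ']
  simp only [Nat.cast_zero, mul_zero, add_zero, Pi2]
  rw [mul_comm]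
  congr 1
  apply Finset.prod_congr rfl
  intro x _
  push_cast
  ring

lemma Pi2_pos (s m : ℕ) (hs : 1 ≤ s) : 0 < Pi2 s m := by
  apply Finset.prod_pos
  intro i _
  have : (1:ℚ) ≤ (s:ℚ) := by exact_mod_cast hs
  positivity

/-- coefficients of the `₀F₁`-type series. -/
def cw (s m : ℕ) : ℚ := 1 / ((8:ℚ)^m * m.factorial * Pi2 s m)

def w (s : ℕ) : PowerSeries ℚ := PowerSeries.mk (cw s)

lemma coeff_w (s m : ℕ) : (PowerSeries.coeff (R := ℚ) m) (w s) = cw s m := coeff_mk m _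

lemma constantCoeff_w (s : ℕ) : (PowerSeries.constantCoeff (R := ℚ)) (w s) = 1 := by
  rw [← coeff_zero_eq_constantCoeff_apply, coeff_w, cw, Pi2_zero]
  norm_num

lemma cw_rec (s : ℕ) (hs : 1 ≤ s) (m : ℕ) :
    cw s (m+1) = cw (s+2) (m+1) + (1/(4*(s:ℚ)*((s:ℚ)+2))) * cw (s+4) m := by
  have hp := Pi2_pos (s+2) m (by omega)
  set p := Pi2 (s+2) m with hpdef
  have h1 : Pi2 s (m+1) = (s:ℚ) * p := by rw [Pi2_succ']
  have h2 : Pi2 (s+2) (m+1) = p * ((s:ℚ) + 2 + 2*m) := by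
    rw [Pi2_succ]; push_cast; ring
  have h3 : ((s:ℚ) + 2) * Pi2 (s+4) m = p * ((s:ℚ) + 2 + 2*m) := by
    have ha := Pi2_succ' (s+2) m
    have h2' := Pi2_succ (s+2) m
    rw [ha, show s+2+2 = s+4 from by omega] at h2'
    push_cast at h2'
    rw [← h2']
  have h4 : Pi2 (s+4) m = p * ((s:ℚ) + 2 + 2*m) / ((s:ℚ)+2) := by
    field_simp at h3 ⊢
    linarith [h3]
  have hs0 : (s:ℚ) ≠ 0 := by positivity
  have hs2 : (s:ℚ) + 2 ≠ 0 := by positivity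
  have hsm : (s:ℚ) + 2 + 2*m ≠ 0 := by positivity
  have hfac : (m.factorial : ℚ) ≠ 0 := by exact_mod_cast m.factorial_ne_zero
  have hp0 : p ≠ 0 := ne_of_gt hp
  rw [cw, cw, cw, h1, h2, h4]
  rw [Nat.factorial_succ]
  push_cast
  field_simp
  ring

lemma wrec (s : ℕ) (hs : 1 ≤ s) :
    w s = w (s+2) + PowerSeries.C (R := ℚ) (1/(4*(s:ℚ)*((s:ℚ)+2))) * (PowerSeries.X * w (s+4)) := by
  ext m
  cases m with
  | zero =>
    simp only [coeff_zero_eq_constantCoeff_apply, map_add, map_mul, constantCoeff_w,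
      constantCoeff_C, constantCoeff_X]
    ring
  | succ m =>
    rw [map_add, coeff_C_mul, coeff_succ_X_mul, coeff_w, coeff_w, coeff_w, cw_rec s hs m]


/-- diagonal (level-step) weights of the J-fraction -/
def aa (k : ℕ) : ℚ := -(1/(2*(4*(k:ℚ)+3)*(4*(k:ℚ)+7)))

/-- down-step weights of the J-fraction -/
def bb (k : ℕ) : ℚ := 1/(16*(4*(k:ℚ)+1)*(4*(k:ℚ)+3)^2*(4*(k:ℚ)+5))

lemma wrecS (k : ℕ) :
    w (4*k+3) = (1 - PowerSeries.C (R := ℚ) (aa k) * PowerSeries.X) * w (4*k+7)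
      - PowerSeries.C (R := ℚ) (bb (k+1)) * PowerSeries.X^2 * w (4*k+11) := by
  have hk0 : (0:ℚ) ≤ (k:ℚ) := Nat.cast_nonneg k
  have h1 := wrec (4*k+3) (by omega)
  rw [show 4*k+3+2 = 4*k+5 from by omega, show 4*k+3+4 = 4*k+7 from by omega] at h1
  have e1 : (1:ℚ)/(4*((4*k+3:ℕ):ℚ)*(((4*k+3:ℕ):ℚ)+2)) = 1/(4*(4*(k:ℚ)+3)*(4*(k:ℚ)+5)) := by
    push_cast; ring
  rw [e1] at h1
  have h2 := wrec (4*k+5) (by omega)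
  rw [show 4*k+5+2 = 4*k+7 from by omega, show 4*k+5+4 = 4*k+9 from by omega] at h2
  have e2 : (1:ℚ)/(4*((4*k+5:ℕ):ℚ)*(((4*k+5:ℕ):ℚ)+2)) = 1/(4*(4*(k:ℚ)+5)*(4*(k:ℚ)+7)) := by
    push_cast; ring
  rw [e2] at h2
  have h3 := wrec (4*k+7) (by omega)
  rw [show 4*k+7+2 = 4*k+9 from by omega, show 4*k+7+4 = 4*k+11 from by omega] at h3
  have e3 : (1:ℚ)/(4*((4*k+7:ℕ):ℚ)*(((4*k+7:ℕ):ℚ)+2)) = 1/(4*(4*(k:ℚ)+7)*(4*(k:ℚ)+9)) := by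
    push_cast; ring
  rw [e3] at h3
  set A : ℚ := 1/(4*(4*(k:ℚ)+3)*(4*(k:ℚ)+5)) with hA
  set B : ℚ := 1/(4*(4*(k:ℚ)+5)*(4*(k:ℚ)+7)) with hB
  set Cc : ℚ := 1/(4*(4*(k:ℚ)+7)*(4*(k:ℚ)+9)) with hCc
  have hca : PowerSeries.C (R := ℚ) (aa k) = -(PowerSeries.C (R := ℚ) A + PowerSeries.C (R := ℚ) B) := by
    rw [← map_add, ← map_neg]
    congr 1
    rw [aa, hA, hB]
    have n1 : (4*(k:ℚ)+3) ≠ 0 := by positivity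
    have n2 : (4*(k:ℚ)+5) ≠ 0 := by positivity
    have n3 : (4*(k:ℚ)+7) ≠ 0 := by positivity
    field_simp
    ring
  have hcb : PowerSeries.C (R := ℚ) (bb (k+1)) = PowerSeries.C (R := ℚ) B * PowerSeries.C (R := ℚ) Cc := by
    rw [← map_mul]
    congr 1
    rw [bb, hB, hCc]
    have n2 : (4*(k:ℚ)+5) ≠ 0 := by positivity
    have n3 : (4*(k:ℚ)+7) ≠ 0 := by positivity
    have n4 : (4*(k:ℚ)+9) ≠ 0 := by positivity
    push_cast
    field_simp
    ring
  rw [hca, hcb]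
  linear_combination h1 + h2 - (PowerSeries.C (R := ℚ) B * PowerSeries.X) * h3


def Sser (k : ℕ) : PowerSeries ℚ := PowerSeries.X^k * w (4*k+7) * (w 3)⁻¹

def P (i k : ℕ) : ℚ := PowerSeries.coeff (R := ℚ) i (Sser k)

lemma constantCoeff_w3_ne : (PowerSeries.constantCoeff (R := ℚ)) (w 3) ≠ 0 := by
  rw [constantCoeff_w]; norm_num

lemma w3_mul_inv : w 3 * (w 3)⁻¹ = 1 :=
  PowerSeries.mul_inv_cancel _ constantCoeff_w3_ne

lemma P_eq_zero {i k : ℕ} (h : i < k) : P i k = 0 := by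
  rw [P, Sser, mul_assoc, PowerSeries.coeff_X_pow_mul']
  rw [if_neg (by omega)]

lemma P_diag (i : ℕ) : P i i = 1 := by
  rw [P, Sser, mul_assoc, PowerSeries.coeff_X_pow_mul', if_pos le_rfl, Nat.sub_self,
    coeff_zero_eq_constantCoeff_apply, map_mul, constantCoeff_w, PowerSeries.constantCoeff_inv,
    constantCoeff_w]
  norm_num

lemma SserZero : Sser 0 = 1 + PowerSeries.C (R := ℚ) (aa 0) * PowerSeries.X * Sser 0
    + PowerSeries.C (R := ℚ) (bb 1) * PowerSeries.X * Sser 1 := by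
  have h := wrecS 0
  rw [show 4*0+3 = 3 from by omega] at h
  simp only [Sser]
  linear_combination (-((w 3)⁻¹)) * h + w3_mul_inv

lemma SserSucc (k : ℕ) : Sser (k+1) = PowerSeries.X * Sser k
    + PowerSeries.C (R := ℚ) (aa (k+1)) * PowerSeries.X * Sser (k+1)
    + PowerSeries.C (R := ℚ) (bb (k+2)) * PowerSeries.X * Sser (k+2) := by
  have h := wrecS (k+1)
  rw [show 4*(k+1)+3 = 4*k+7 from by omega, show 4*(k+1)+11 = 4*(k+2)+7 from by omega] at h
  simp only [Sser]
  linear_combination (-(PowerSeries.X^(k+1) * (w 3)⁻¹)) * h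

lemma Prec0 (i : ℕ) : P (i+1) 0 = aa 0 * P i 0 + bb 1 * P i 1 := by
  have := congrArg (fun f => (PowerSeries.coeff (R := ℚ) (i+1)) f) SserZero
  simp only [map_add, mul_assoc, PowerSeries.coeff_C_mul, PowerSeries.coeff_succ_X_mul,
    PowerSeries.coeff_one] at this
  simpa [P] using this

lemma PrecS (i k : ℕ) :
    P (i+1) (k+1) = P i k + aa (k+1) * P i (k+1) + bb (k+2) * P i (k+2) := by
  have := congrArg (fun f => (PowerSeries.coeff (R := ℚ) (i+1)) f) (SserSucc k)
  simp only [map_add, mul_assoc, PowerSeries.coeff_C_mul, PowerSeries.coeff_succ_X_mul] at this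
  simpa [P] using this


def Beta (k : ℕ) : ℚ := ∏ h ∈ Finset.range k, bb (h+1)

lemma Beta_zero : Beta 0 = 1 := by simp [Beta]

lemma Beta_succ (k : ℕ) : Beta (k+1) = Beta k * bb (k+1) := by
  simp [Beta, Finset.prod_range_succ]

def T (N i j : ℕ) : ℚ := ∑ k ∈ Finset.range N, P i k * Beta k * P j k

lemma Prec (i k : ℕ) :
    P (i+1) k = (if k = 0 then 0 else P i (k-1)) + aa k * P i k + bb (k+1) * P i (k+1) := by
  cases k with
  | zero => simpa using Prec0 i
  | succ k => simpa using PrecS i k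

lemma swapT {N i j : ℕ} (hi : i < N) (hj : j < N) :
    (∑ k ∈ Finset.range N, P (i+1) k * Beta k * P j k)
      = ∑ k ∈ Finset.range N, P i k * Beta k * P (j+1) k := by
  obtain ⟨M, rfl⟩ : ∃ M, N = M + 1 := ⟨N - 1, by omega⟩
  have expand : ∀ (x y : ℕ), (∑ k ∈ Finset.range (M+1), P (x+1) k * Beta k * P y k)
      = (∑ k ∈ Finset.range (M+1), (if k = 0 then 0 else P x (k-1)) * Beta k * P y k)
        + (∑ k ∈ Finset.range (M+1), aa k * (P x k * Beta k * P y k))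
        + (∑ k ∈ Finset.range (M+1), bb (k+1) * P x (k+1) * Beta k * P y k) := by
    intro x y
    rw [← Finset.sum_add_distrib, ← Finset.sum_add_distrib]
    apply Finset.sum_congr rfl
    intro k _
    rw [Prec]
    ring
  have expand' : ∀ (x y : ℕ), (∑ k ∈ Finset.range (M+1), P x k * Beta k * P (y+1) k)
      = (∑ k ∈ Finset.range (M+1), P x k * Beta k * (if k = 0 then 0 else P y (k-1)))
        + (∑ k ∈ Finset.range (M+1), aa k * (P x k * Beta k * P y k))
        + (∑ k ∈ Finset.range (M+1), P x k * Beta k * (bb (k+1) * P y (k+1))) := by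
    intro x y
    rw [← Finset.sum_add_distrib, ← Finset.sum_add_distrib]
    apply Finset.sum_congr rfl
    intro k _
    rw [Prec]
    ring
  rw [expand, expand']
  have e1 : (∑ k ∈ Finset.range (M+1), (if k = 0 then 0 else P i (k-1)) * Beta k * P j k)
      = ∑ k ∈ Finset.range (M+1), P i k * Beta k * (bb (k+1) * P j (k+1)) := by
    rw [Finset.sum_range_succ' (fun k => (if k = 0 then 0 else P i (k-1)) * Beta k * P j k)]
    rw [Finset.sum_range_succ (fun k => P i k * Beta k * (bb (k+1) * P j (k+1)))]
    rw [P_eq_zero (show j < M + 1 from hj)]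
    simp only [if_pos rfl, ite_true, zero_mul, mul_zero, add_zero]
    apply Finset.sum_congr rfl
    intro k _
    rw [if_neg (Nat.succ_ne_zero k), Nat.add_sub_cancel, Beta_succ]
    ring
  have e2 : (∑ k ∈ Finset.range (M+1), bb (k+1) * P i (k+1) * Beta k * P j k)
      = ∑ k ∈ Finset.range (M+1), P i k * Beta k * (if k = 0 then 0 else P j (k-1)) := by
    rw [Finset.sum_range_succ (fun k => bb (k+1) * P i (k+1) * Beta k * P j k)]
    rw [Finset.sum_range_succ' (fun k => P i k * Beta k * (if k = 0 then 0 else P j (k-1)))]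
    rw [P_eq_zero (show i < M + 1 from hi)]
    simp only [if_pos rfl, ite_true, zero_mul, mul_zero, add_zero]
    apply Finset.sum_congr rfl
    intro k _
    rw [if_neg (Nat.succ_ne_zero k), Nat.add_sub_cancel, Beta_succ]
    ring
  rw [e1, e2]
  ring

lemma T_eq (N : ℕ) : ∀ j i, i + j < N → T N i j = P (i+j) 0 := by
  intro j
  induction j with
  | zero =>
    intro i hi
    rw [T, Finset.sum_eq_single_of_mem 0 (Finset.mem_range.2 (by omega))]
    · rw [P_diag, Beta_zero, Nat.add_zero]; ring
    · intro b _ hb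
      rw [P_eq_zero (show 0 < b from by omega)]
      ring
  | succ j ih =>
    intro i hi
    have h1 : T N i (j+1) = T N (i+1) j := by
      rw [T, T, ← swapT (show i < N from by omega) (show j < N from by omega)]
    rw [h1, ih (i+1) (by omega), show i+1+j = i+(j+1) from by omega]

lemma T_mono {N M i j : ℕ} (hi : i < N) (hNM : N ≤ M) : T N i j = T M i j := by
  apply Finset.sum_subset (Finset.range_subset_range.2 hNM)
  intro k _ hk
  rw [P_eq_zero (show i < k from by simp at hk; omega)]
  ring

lemma T_val {n i j : ℕ} (hi : i < n) (hj : j < n) : T n i j = P (i+j) 0 := by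
  rw [T_mono hi (show n ≤ n + (i+j+1) from by omega)]
  rw [← T_mono (show i < i+j+1 from by omega) (show i+j+1 ≤ n + (i+j+1) from by omega)]
  exact T_eq (i+j+1) j i (by omega)


lemma bernoulli_odd_zero {n : ℕ} (h : Odd n) (h1 : 1 < n) : bernoulli n = 0 := by
  rw [bernoulli_eq_bernoulli'_of_ne_one (by omega), bernoulli'_eq_zero_of_odd h h1]

lemma exp_sub_one_ne : (PowerSeries.exp ℚ - 1) ≠ 0 := by
  intro h
  have := congrArg (fun f => (PowerSeries.coeff (R := ℚ) 1) f) h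
  simp [PowerSeries.coeff_exp, PowerSeries.coeff_one] at this

lemma key_half : PowerSeries.rescale (2:ℚ) (bernoulliPowerSeries ℚ) * (PowerSeries.exp ℚ + 1)
    = PowerSeries.C (R := ℚ) 2 * bernoulliPowerSeries ℚ := by
  have h0 := bernoulliPowerSeries_mul_exp_sub_one ℚ
  have h2 : PowerSeries.rescale (2:ℚ) (bernoulliPowerSeries ℚ)
      * (PowerSeries.rescale (2:ℚ) (PowerSeries.exp ℚ) - 1) = PowerSeries.C (R := ℚ) 2 * PowerSeries.X := by
    have := congrArg (PowerSeries.rescale (2:ℚ)) h0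
    simpa [map_mul, map_sub, map_one, PowerSeries.rescale_X] using this
  have hE2 : PowerSeries.rescale (2:ℚ) (PowerSeries.exp ℚ)
      = PowerSeries.exp ℚ * PowerSeries.exp ℚ := by
    have h := PowerSeries.exp_mul_exp_eq_exp_add (1:ℚ) 1
    rw [PowerSeries.rescale_one] at h
    rw [show ((1:ℚ)+1) = 2 from by norm_num] at h
    simpa using h.symm
  apply mul_right_cancel₀ exp_sub_one_ne
  calc PowerSeries.rescale (2:ℚ) (bernoulliPowerSeries ℚ) * (PowerSeries.exp ℚ + 1)
        * (PowerSeries.exp ℚ - 1)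
      = PowerSeries.rescale (2:ℚ) (bernoulliPowerSeries ℚ)
        * (PowerSeries.rescale (2:ℚ) (PowerSeries.exp ℚ) - 1) := by rw [hE2]; ring
    _ = PowerSeries.C (R := ℚ) 2 * PowerSeries.X := h2
    _ = PowerSeries.C (R := ℚ) 2 * (bernoulliPowerSeries ℚ * (PowerSeries.exp ℚ - 1)) := by rw [h0]
    _ = PowerSeries.C (R := ℚ) 2 * bernoulliPowerSeries ℚ * (PowerSeries.exp ℚ - 1) := by ring

lemma bern_sum (m : ℕ) (hm : 1 ≤ m) :
    ∑ i ∈ Finset.range (2*m+2),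
      (2:ℚ)^i * bernoulli i * (1/(i.factorial * ((2*m+1-i).factorial) : ℚ)) = 0 := by
  have hodd : bernoulli (2*m+1) = 0 := bernoulli_odd_zero ⟨m, by omega⟩ (by omega)
  have h := congrArg (fun f => (PowerSeries.coeff (R := ℚ) (2*m+1)) f) key_half
  rw [PowerSeries.coeff_C_mul, PowerSeries.coeff_mul,
    Finset.Nat.sum_antidiagonal_eq_sum_range_succ_mk] at h
  have hΦ : (PowerSeries.coeff (R := ℚ) (2*m+1)) (bernoulliPowerSeries ℚ)
      = bernoulli (2*m+1) / ((2*m+1).factorial : ℚ) := by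
    rw [bernoulliPowerSeries, PowerSeries.coeff_mk]; simp
  rw [hΦ, hodd] at h
  have hr : ∀ i, (PowerSeries.coeff (R := ℚ) i) (PowerSeries.rescale (2:ℚ) (bernoulliPowerSeries ℚ))
      = 2^i * bernoulli i / i.factorial := by
    intro i
    rw [PowerSeries.coeff_rescale, bernoulliPowerSeries, PowerSeries.coeff_mk]
    simp [mul_div_assoc]
  have he : ∀ j : ℕ, (PowerSeries.coeff (R := ℚ) j) (PowerSeries.exp ℚ + 1)
      = 1/(j.factorial : ℚ) + (if j = 0 then 1 else 0) := by
    intro j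
    rw [map_add, PowerSeries.coeff_exp, PowerSeries.coeff_one]
    simp
  simp only [hr, he] at h
  rw [show (2*m+1).succ = 2*m+2 from by omega] at h
  have hsplit : ∀ i ∈ Finset.range (2*m+2),
      2^i * bernoulli i / (i.factorial : ℚ) * (1/((2*m+1-i).factorial : ℚ)
        + (if 2*m+1-i = 0 then 1 else 0))
      = (2:ℚ)^i * bernoulli i * (1/(i.factorial * ((2*m+1-i).factorial) : ℚ))
        + (if i = 2*m+1 then (2:ℚ)^i * bernoulli i / (i.factorial : ℚ) else 0) := by
    intro i hi
    rw [Finset.mem_range] at hi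
    by_cases hc : i = 2*m+1
    · subst hc
      rw [if_pos rfl, if_pos (by omega)]
      push_cast
      ring
    · rw [if_neg hc, if_neg (by omega)]
      push_cast
      ring
  rw [Finset.sum_congr rfl hsplit, Finset.sum_add_distrib] at h
  rw [Finset.sum_ite_eq' (Finset.range (2*m+2)) (2*m+1)
    (fun i => (2:ℚ)^i * bernoulli i / (i.factorial : ℚ))] at h
  rw [if_pos (Finset.mem_range.2 (by omega)), hodd] at h
  simp only [mul_zero, zero_mul, zero_div, add_zero] at h
  linarith [h]


lemma sum_even_odd (f : ℕ → ℚ) (M : ℕ) :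
    ∑ i ∈ Finset.range (2*M), f i
      = (∑ t ∈ Finset.range M, f (2*t)) + ∑ t ∈ Finset.range M, f (2*t+1) := by
  induction M with
  | zero => simp
  | succ M ih =>
    rw [show 2*(M+1) = (2*M+1)+1 from by omega, Finset.sum_range_succ, Finset.sum_range_succ,
      ih, Finset.sum_range_succ, Finset.sum_range_succ]
    ring_nf

lemma bern_even (m : ℕ) (hm : 1 ≤ m) :
    ∑ t ∈ Finset.range (m+1),
      (4:ℚ)^t * bernoulli (2*t) * (1/(((2*t).factorial : ℚ) * ((2*(m-t)+1).factorial : ℚ)))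
      = 1/((2*m).factorial : ℚ) := by
  have h := bern_sum m hm
  rw [show 2*m+2 = 2*(m+1) from by omega,
    sum_even_odd (fun i => (2:ℚ)^i * bernoulli i * (1/(i.factorial * ((2*m+1-i).factorial) : ℚ)))
      (m+1)] at h
  have hodds : ∑ t ∈ Finset.range (m+1),
      (2:ℚ)^(2*t+1) * bernoulli (2*t+1)
        * (1/(((2*t+1).factorial : ℚ) * ((2*m+1-(2*t+1)).factorial : ℚ)))
      = -(1/((2*m).factorial : ℚ)) := by
    rw [Finset.sum_eq_single_of_mem 0 (Finset.mem_range.2 (by omega))]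
    · norm_num [bernoulli_one]
    · intro t _ ht
      rw [bernoulli_odd_zero ⟨t, by omega⟩ (by omega)]
      ring
  rw [hodds] at h
  have hev : ∀ t ∈ Finset.range (m+1),
      (2:ℚ)^(2*t) * bernoulli (2*t) * (1/(((2*t).factorial : ℚ) * ((2*m+1-2*t).factorial : ℚ)))
      = (4:ℚ)^t * bernoulli (2*t)
          * (1/(((2*t).factorial : ℚ) * ((2*(m-t)+1).factorial : ℚ))) := by
    intro t ht
    rw [Finset.mem_range] at ht
    rw [show 2*m+1-2*t = 2*(m-t)+1 from by omega, show (2:ℚ)^(2*t) = 4^t from by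
      rw [pow_mul]; norm_num]
  rw [Finset.sum_congr rfl hev] at h
  linarith [h]

/-- the even Bernoulli exponential-type generating series in `x = z²` -/
def Bser : PowerSeries ℚ := PowerSeries.mk fun m => bernoulli (2*m) / ((2*m).factorial : ℚ)

lemma fact_Pi2_three (j : ℕ) : (2:ℚ)^j * (j.factorial : ℚ) * Pi2 3 j = ((2*j+1).factorial : ℚ) := by
  induction j with
  | zero => simp [Pi2_zero]
  | succ j ih =>
    rw [Pi2_succ, show 2*(j+1)+1 = (2*j+1)+1+1 from by omega]
    rw [Nat.factorial_succ, Nat.factorial_succ, Nat.factorial_succ]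
    push_cast
    linear_combination ((2*(j:ℚ)+3) * (2*(j:ℚ)+2)) * ih

lemma fact_Pi2_one (j : ℕ) : (2:ℚ)^j * (j.factorial : ℚ) * Pi2 1 j = ((2*j).factorial : ℚ) := by
  induction j with
  | zero => simp [Pi2_zero]
  | succ j ih =>
    rw [Pi2_succ, show 2*(j+1) = (2*j)+1+1 from by omega]
    rw [Nat.factorial_succ, Nat.factorial_succ, Nat.factorial_succ]
    push_cast
    linear_combination ((2*(j:ℚ)+2) * (2*(j:ℚ)+1)) * ih

lemma cw_three (j : ℕ) : cw 3 j = 1/((4:ℚ)^j * ((2*j+1).factorial : ℚ)) := by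
  rw [cw, ← fact_Pi2_three j, show (8:ℚ)^j = 4^j * 2^j from by rw [← mul_pow]; norm_num]
  ring_nf

lemma cw_one (m : ℕ) : cw 1 m = 1/((4:ℚ)^m * ((2*m).factorial : ℚ)) := by
  rw [cw, ← fact_Pi2_one m, show (8:ℚ)^m = 4^m * 2^m from by rw [← mul_pow]; norm_num]
  ring_nf

lemma Bser_mul_w3 : Bser * w 3 = w 1 := by
  ext m
  rw [PowerSeries.coeff_mul, Finset.Nat.sum_antidiagonal_eq_sum_range_succ_mk, coeff_w, cw_one]
  have hterm : ∀ i ∈ Finset.range (m+1),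
      (PowerSeries.coeff (R := ℚ) i) Bser * (PowerSeries.coeff (R := ℚ) (m-i)) (w 3)
      = (1/(4:ℚ)^m) * ((4:ℚ)^i * bernoulli (2*i)
          * (1/(((2*i).factorial : ℚ) * ((2*(m-i)+1).factorial : ℚ)))) := by
    intro i hi
    rw [Finset.mem_range] at hi
    rw [coeff_w, cw_three, Bser, PowerSeries.coeff_mk]
    have h4 : (4:ℚ)^(m-i) * (4:ℚ)^i = 4^m := by
      rw [← pow_add]
      congr 1
      omega
    have f1 : ((2*i).factorial : ℚ) ≠ 0 := by exact_mod_cast (2*i).factorial_ne_zero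
    have f2 : ((2*(m-i)+1).factorial : ℚ) ≠ 0 := by exact_mod_cast (2*(m-i)+1).factorial_ne_zero
    have f3 : (4:ℚ)^i ≠ 0 := by positivity
    have f4 : (4:ℚ)^(m-i) ≠ 0 := by positivity
    field_simp
    linear_combination (-(bernoulli (2*i))) * h4
  rw [Finset.sum_congr rfl hterm, ← Finset.mul_sum]
  cases Nat.eq_zero_or_pos m with
  | inl h0 =>
    subst h0
    norm_num
  | inr hpos =>
    rw [bern_even m hpos]
    have : ((2*m).factorial : ℚ) ≠ 0 := by exact_mod_cast (2*m).factorial_ne_zero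
    field_simp


lemma w_one_three_seven :
    w 1 = (1 + PowerSeries.C (R := ℚ) (1/12) * PowerSeries.X) * w 3
      - PowerSeries.C (R := ℚ) (1/720) * PowerSeries.X^2 * w 7 := by
  have h1 := wrec 1 le_rfl
  rw [show 1+2 = 3 from rfl, show 1+4 = 5 from rfl] at h1
  have e1 : (1:ℚ)/(4*((1:ℕ):ℚ)*(((1:ℕ):ℚ)+2)) = 1/12 := by norm_num
  rw [e1] at h1
  have h2 := wrec 3 (by omega)
  rw [show 3+2 = 5 from rfl, show 3+4 = 7 from rfl] at h2
  have e2 : (1:ℚ)/(4*((3:ℕ):ℚ)*(((3:ℕ):ℚ)+2)) = 1/60 := by norm_num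
  rw [e2] at h2
  have hc : PowerSeries.C (R := ℚ) ((1:ℚ)/720) = PowerSeries.C (R := ℚ) (1/12) * PowerSeries.C (R := ℚ) (1/60) := by
    rw [← map_mul]
    norm_num
  rw [hc]
  linear_combination h1 - (PowerSeries.C (R := ℚ) (1/12) * PowerSeries.X) * h2

lemma bernoulli_link (m : ℕ) :
    bernoulli (2*m+4) / (((2*m+4).factorial : ℚ)) = -(1/720) * P m 0 := by
  have hP : P m 0 = (PowerSeries.coeff (R := ℚ) m) (w 7 * (w 3)⁻¹) := by
    rw [P, Sser]
    norm_num
  have h2 : Bser = 1 + PowerSeries.C (R := ℚ) (1/12) * PowerSeries.X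
      - PowerSeries.C (R := ℚ) (1/720) * PowerSeries.X^2 * (w 7 * (w 3)⁻¹) := by
    have h := Bser_mul_w3
    rw [w_one_three_seven] at h
    linear_combination (w 3)⁻¹ * h
      + (1 + PowerSeries.C (R := ℚ) (1/12) * PowerSeries.X - Bser) * w3_mul_inv
  have h3 := congrArg (fun f => (PowerSeries.coeff (R := ℚ) (m+2)) f) h2
  rw [Bser, PowerSeries.coeff_mk] at h3
  rw [map_sub, map_add, PowerSeries.coeff_one, PowerSeries.coeff_C_mul] at h3
  rw [show PowerSeries.C (R := ℚ) (1/720) * PowerSeries.X^2 * (w 7 * (w 3)⁻¹)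
      = PowerSeries.C (R := ℚ) (1/720) * (PowerSeries.X^2 * (w 7 * (w 3)⁻¹)) from mul_assoc _ _ _] at h3
  rw [PowerSeries.coeff_C_mul, PowerSeries.coeff_X] at h3
  rw [PowerSeries.coeff_X_pow_mul (w 7 * (w 3)⁻¹) 2 m] at h3
  rw [if_neg (by omega), if_neg (by omega)] at h3
  rw [show 2*(m+2) = 2*m+4 from by omega] at h3
  rw [hP]
  rw [h3]
  ring


lemma det_hankel (n : ℕ) :
    Matrix.det (Matrix.of fun i j : Fin n =>
        bernoulli (2 * i.1 + 2 * j.1 + 4) / ((2 * i.1 + 2 * j.1 + 4).factorial : ℚ))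
      = ∏ k ∈ Finset.range n, ((-(1/720):ℚ) * Beta k) := by
  classical
  set L : Matrix (Fin n) (Fin n) ℚ := Matrix.of (fun i k : Fin n => P i.1 k.1) with hLdef
  set D : Matrix (Fin n) (Fin n) ℚ :=
    Matrix.diagonal (fun k : Fin n => (-(1/720):ℚ) * Beta k.1) with hDdef
  have hfact : (Matrix.of fun i j : Fin n =>
      bernoulli (2 * i.1 + 2 * j.1 + 4) / ((2 * i.1 + 2 * j.1 + 4).factorial : ℚ))
      = L * D * L.transpose := by
    ext i j
    rw [Matrix.mul_apply]
    simp only [Matrix.mul_diagonal, Matrix.transpose_apply, hLdef, hDdef, Matrix.of_apply]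
    have : ∑ k : Fin n, P i.1 k.1 * (-(1/720) * Beta k.1) * P j.1 k.1
        = ∑ k ∈ Finset.range n, P i.1 k * (-(1/720) * Beta k) * P j.1 k :=
      Fin.sum_univ_eq_sum_range (fun k => P i.1 k * (-(1/720) * Beta k) * P j.1 k) n
    rw [this]
    have hT : ∑ k ∈ Finset.range n, P i.1 k * (-(1/720) * Beta k) * P j.1 k
        = -(1/720) * T n i.1 j.1 := by
      rw [T, Finset.mul_sum]
      apply Finset.sum_congr rfl
      intro k _
      ring
    rw [hT, T_val i.2 j.2, ← bernoulli_link (i.1 + j.1),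
      show 2*(i.1+j.1)+4 = 2*i.1+2*j.1+4 from by omega]
  rw [hfact, Matrix.det_mul, Matrix.det_mul, Matrix.det_transpose]
  have hLtri : L.BlockTriangular OrderDual.toDual := by
    intro i j hij
    exact P_eq_zero (show i.1 < j.1 from hij)
  have hdetL : L.det = 1 := by
    rw [Matrix.det_of_lowerTriangular L hLtri]
    apply Finset.prod_eq_one
    intro i _
    exact P_diag i.1
  rw [hdetL, Matrix.det_diagonal]
  rw [Fin.prod_univ_eq_prod_range (fun k => (-(1/720):ℚ) * Beta k) n]
  ring


def Qprod (n : ℕ) : ℚ := ∏ k ∈ Finset.Icc 1 (2*n), ((k:ℚ) + 1/2)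

lemma Qprod_pos (n : ℕ) : 0 < Qprod n := by
  apply Finset.prod_pos
  intro k _
  positivity

lemma Qprod_succ (n : ℕ) :
    Qprod (n+1) = Qprod n * (((2*n+1:ℕ):ℚ) + 1/2) * (((2*n+2:ℕ):ℚ) + 1/2) := by
  rw [Qprod, show 2*(n+1) = (2*n+1)+1 from by omega,
    Finset.prod_Icc_succ_top (by omega : 1 ≤ (2*n+1)+1),
    Finset.prod_Icc_succ_top (by omega : 1 ≤ 2*n+1)]
  rfl

lemma BQ (n : ℕ) :
    Beta n * (Qprod n)^2 * (2*(n:ℚ)+3/2)^2 * (2*(n:ℚ)+5/2) * 2^(8*n+7) = 720 := by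
  induction n with
  | zero =>
    rw [Beta_zero, show Qprod 0 = 1 from by simp [Qprod]]
    norm_num
  | succ n ih =>
    have hQ := Qprod_pos n
    have h1 : (2*(n:ℚ)+3/2) > 0 := by positivity
    have h2 : (2*(n:ℚ)+5/2) > 0 := by positivity
    have h3 : (0:ℚ) < 2^(8*n+7) := by positivity
    have hBeta : Beta n = 720 / ((Qprod n)^2 * (2*(n:ℚ)+3/2)^2 * (2*(n:ℚ)+5/2) * 2^(8*n+7)) := by
      rw [eq_div_iff (by positivity)]
      linarith [ih]
    rw [Beta_succ, Qprod_succ, hBeta, bb]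
    have e1 : (4*((n+1:ℕ):ℚ)+1) = 4*(n:ℚ)+5 := by push_cast; ring
    have e2 : (4*((n+1:ℕ):ℚ)+3) = 4*(n:ℚ)+7 := by push_cast; ring
    have e3 : (4*((n+1:ℕ):ℚ)+5) = 4*(n:ℚ)+9 := by push_cast; ring
    rw [e1, e2, e3]
    have d1 : (4*(n:ℚ)+5) > 0 := by positivity
    have d2 : (4*(n:ℚ)+7) > 0 := by positivity
    have d3 : (4*(n:ℚ)+9) > 0 := by positivity
    have c1 : (((2*n+1:ℕ):ℚ) + 1/2) = 2*(n:ℚ)+3/2 := by push_cast; ring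
    have c2 : (((2*n+2:ℕ):ℚ) + 1/2) = 2*(n:ℚ)+5/2 := by push_cast; ring
    rw [c1, c2]
    rw [show 8*(n+1)+7 = (8*n+7)+8 from by omega, pow_add]
    have e5 : (2*((n+1:ℕ):ℚ)+3/2) = 2*(n:ℚ)+7/2 := by push_cast; ring
    have e6 : (2*((n+1:ℕ):ℚ)+5/2) = 2*(n:ℚ)+9/2 := by push_cast; ring
    push_cast
    field_simp
    ring

lemma final_arith (n : ℕ) :
    ∏ k ∈ Finset.range n, ((-(1/720):ℚ) * Beta k)
      = (-1 : ℚ) ^ n * (2 : ℚ) ^ (-((n : ℤ) * (4 * (n : ℤ) + 3))) *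
        ∏ k ∈ Finset.Icc 1 (2 * n), ((k : ℚ) + 1/2) ^ ((k : ℤ) - 2 * (n : ℤ) - 1) := by
  induction n with
  | zero => norm_num
  | succ n ih =>
    rw [Finset.prod_range_succ, ih]
    -- massage RHS at n+1
    have hpow : (2 : ℚ) ^ (-(((n:ℤ)+1) * (4 * ((n:ℤ)+1) + 3)))
        = (2 : ℚ) ^ (-((n : ℤ) * (4 * (n : ℤ) + 3))) * (2:ℚ) ^ (-(8*(n:ℤ)+7)) := by
      rw [← zpow_add₀ (by norm_num : (2:ℚ) ≠ 0)]
      congr 1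
      ring
    have hsplit : ∏ k ∈ Finset.Icc 1 (2 * (n+1)), ((k : ℚ) + 1/2) ^ ((k : ℤ) - 2 * ((n:ℤ)+1) - 1)
        = (∏ k ∈ Finset.Icc 1 (2 * n), ((k : ℚ) + 1/2) ^ ((k : ℤ) - 2 * (n:ℤ) - 1))
          * (Qprod n)⁻¹^2
          * ((((2*n+1:ℕ):ℚ) + 1/2)^((-2:ℤ))) * ((((2*n+2:ℕ):ℚ) + 1/2)^((-1:ℤ))) := by
      rw [show 2*(n+1) = (2*n+1)+1 from by omega,
        Finset.prod_Icc_succ_top (by omega : 1 ≤ (2*n+1)+1),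
        Finset.prod_Icc_succ_top (by omega : 1 ≤ 2*n+1)]
      have he1 : (((2*n+1:ℕ):ℤ) - 2*((n:ℤ)+1) - 1) = -2 := by push_cast; ring
      have he2 : ((((2*n+1)+1:ℕ):ℤ) - 2*((n:ℤ)+1) - 1) = -1 := by push_cast; ring
      rw [he1, he2]
      have hmain : ∏ k ∈ Finset.Icc 1 (2*n), ((k : ℚ) + 1/2) ^ ((k : ℤ) - 2 * ((n:ℤ)+1) - 1)
          = (∏ k ∈ Finset.Icc 1 (2 * n), ((k : ℚ) + 1/2) ^ ((k : ℤ) - 2 * (n:ℤ) - 1))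
            * (Qprod n)⁻¹^2 := by
        have : ∀ k ∈ Finset.Icc 1 (2*n), ((k : ℚ) + 1/2) ^ ((k : ℤ) - 2 * ((n:ℤ)+1) - 1)
            = ((k : ℚ) + 1/2) ^ ((k : ℤ) - 2 * (n:ℤ) - 1) * (((k : ℚ) + 1/2)^(2:ℕ))⁻¹ := by
          intro k _
          have hk : ((k:ℚ) + 1/2) ≠ 0 := by positivity
          rw [show ((k : ℤ) - 2 * ((n:ℤ)+1) - 1) = ((k : ℤ) - 2 * (n:ℤ) - 1) + (-2) from by ring,
            zpow_add₀ hk]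
          congr 1
        rw [Finset.prod_congr rfl this, Finset.prod_mul_distrib, Finset.prod_inv_distrib,
          Finset.prod_pow, inv_pow]
        try rfl
      rw [hmain]
      all_goals (rw [show ((2*n+1)+1 : ℕ) = (2*n+2 : ℕ) from by omega]; try ring)
    push_cast
    rw [hpow, hsplit, pow_succ]
    -- now pure algebra using BQ n
    have hQ := Qprod_pos n
    have hq1 : (((2*n+1:ℕ):ℚ) + 1/2) = 2*(n:ℚ)+3/2 := by push_cast; ring
    have hq2 : (((2*n+2:ℕ):ℚ) + 1/2) = 2*(n:ℚ)+5/2 := by push_cast; ring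
    rw [hq1, hq2]
    have h1 : (0:ℚ) < (2*(n:ℚ)+3/2) := by positivity
    have h2 : (0:ℚ) < (2*(n:ℚ)+5/2) := by positivity
    have hz1 : (2*(n:ℚ)+3/2)^((-2:ℤ)) = ((2*(n:ℚ)+3/2)^(2:ℕ))⁻¹ := by
      rw [zpow_neg, ← zpow_natCast]; norm_num
    have hz2 : (2*(n:ℚ)+5/2)^((-1:ℤ)) = (2*(n:ℚ)+5/2)⁻¹ := by
      rw [zpow_neg, zpow_one]
    have hz3 : (2:ℚ) ^ (-(8*(n:ℤ)+7)) = ((2:ℚ)^((8*n+7 : ℕ)))⁻¹ := by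
      have hcast : ((8*n+7 : ℕ) : ℤ) = 8*(n:ℤ)+7 := by push_cast; ring
      rw [← hcast, zpow_neg, zpow_natCast]
    rw [hz1, hz2, hz3]
    have hBeta : Beta n = 720 / ((Qprod n)^2 * (2*(n:ℚ)+3/2)^2 * (2*(n:ℚ)+5/2) * 2^(8*n+7)) := by
      rw [eq_div_iff (by positivity)]
      linarith [BQ n]
    rw [hBeta]
    have h3 : (0:ℚ) < 2^(8*n+7) := by positivity
    generalize (∏ k ∈ Finset.Icc 1 (2 * n), ((k : ℚ) + 1/2) ^ ((k : ℤ) - 2 * (n:ℤ) - 1)) = Z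
    field_simp

end HankelBernoulli

end HankelBernoulli

/-- For `n ≥ 1`, the determinant of the `n × n` Hankel matrix with `(i,j)`-entry
`B_{2i+2j}/(2i+2j)!` (for `1 ≤ i,j ≤ n`, `B_m` being the Bernoulli numbers) equals
`(-1)^n · 2^{-n(4n+3)} · ∏_{k=1}^{2n} (k+1/2)^{k-2n-1}`. -/
theorem det_hankel_bernoulli_ell_one (n : ℕ) (hn : 1 ≤ n) :
    Matrix.det (Matrix.of fun i j : Fin n =>
        bernoulli (2 * i.1 + 2 * j.1 + 4) / ((2 * i.1 + 2 * j.1 + 4).factorial : ℚ)) =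
      (-1 : ℚ) ^ n * (2 : ℚ) ^ (-((n : ℤ) * (4 * (n : ℤ) + 3))) *
        ∏ k ∈ Finset.Icc 1 (2 * n), ((k : ℚ) + 1/2) ^ ((k : ℤ) - 2 * (n : ℤ) - 1) := by
  rw [HankelBernoulli.det_hankel n, HankelBernoulli.final_arith n]
end

section
/- Let ν ∉ -ℕ and specialize the Coulomb zeta recurrence to η = 0 and L = ν - 1/2. Then for every k ∈ ℕ one has ζ_{ν-1/2}(2k+1) = 0 and ζ_{ν-1/2}(2k) = 2·σ_{2k}(ν). -/
/-- Specializing the Coulomb zeta recurrence to `η = 0` and `L = ν - 1/2` (with `ν ∉ -ℕ`),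
for every `k ≥ 1` one has `ζ_{ν-1/2}(2k+1) = 0` and `ζ_{ν-1/2}(2k) = 2·σ_{2k}(ν)`.
Here `ζ` is determined by `ζ_L(2) = (1/(2L+3))·(1 + η²/(L+1)²)` and
`ζ_L(k+1) = (1/(2L+k+2))·((2η/(L+1))·ζ_L(k) + Σ_{l=1}^{k-2} ζ_L(l+1)·ζ_L(k-l))` for `k ≥ 2`,
and `σ k` stands for the Rayleigh function `σ_{2k}(ν)` determined by `σ_2(ν) = 1/(4(ν+1))`
and Kishore's recurrence `(k+ν)·σ_{2k}(ν) = Σ_{j=1}^{k-1} σ_{2j}(ν)·σ_{2k-2j}(ν)` for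
`k ≥ 2`. -/
theorem coulomb_zeta_specialization (ν : ℂ) (hν : ∀ m : ℕ, ν ≠ -((m : ℂ) + 1))
    (ζ : ℕ → ℂ)
    (hζ2 : ζ 2 = (1 / (2 * (ν - 1/2) + 3)) * (1 + (0 : ℂ) ^ 2 / ((ν - 1/2) + 1) ^ 2))
    (hζrec : ∀ k : ℕ, 2 ≤ k →
      ζ (k + 1) = (1 / (2 * (ν - 1/2) + (k : ℂ) + 2)) *
        ((2 * (0 : ℂ) / ((ν - 1/2) + 1)) * ζ k +
          ∑ l ∈ Finset.Icc 1 (k - 2), ζ (l + 1) * ζ (k - l)))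
    (σ : ℕ → ℂ) (hσ1 : σ 1 = 1 / (4 * (ν + 1)))
    (hσrec : ∀ k : ℕ, 2 ≤ k →
      ((k : ℂ) + ν) * σ k = ∑ j ∈ Finset.Icc 1 (k - 1), σ j * σ (k - j)) :
    ∀ k : ℕ, 1 ≤ k → ζ (2 * k + 1) = 0 ∧ ζ (2 * k) = 2 * σ k := by
  have hν1 : ν + 1 ≠ 0 := fun h => hν 0 (by simpa using eq_neg_of_add_eq_zero_left h)
  intro k
  induction k using Nat.strong_induction_on with
  | _ k IH =>
    intro hk
    constructor
    · -- odd case : ζ (2k+1) = 0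
      have h := hζrec (2 * k) (by omega)
      have hsum : ∑ l ∈ Finset.Icc 1 (2 * k - 2), ζ (l + 1) * ζ (2 * k - l) = 0 := by
        apply Finset.sum_eq_zero
        intro l hl
        rw [Finset.mem_Icc] at hl
        rcases Nat.even_or_odd l with ⟨j, hj⟩ | ⟨j, hj⟩
        · have e : l + 1 = 2 * j + 1 := by omega
          rw [e, (IH j (by omega) (by omega)).1, zero_mul]
        · have e : 2 * k - l = 2 * (k - j - 1) + 1 := by omega
          rw [e, (IH (k - j - 1) (by omega) (by omega)).1, mul_zero]
      rw [h, hsum]; ring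
    · -- even case : ζ (2k) = 2 σ k
      rcases eq_or_lt_of_le hk with h1 | h2
      · -- k = 1
        subst h1
        norm_num
        rw [hζ2, hσ1, show (2 * (ν - 1/2) + 3 : ℂ) = 2 * (ν + 1) from by ring]
        norm_num
        ring
      · -- k ≥ 2
        have hk2 : 2 ≤ k := h2
        have hk0 : (k : ℂ) + ν ≠ 0 := by
          intro hc
          apply hν (k - 1)
          have e : ((k - 1 : ℕ) : ℂ) = (k : ℂ) - 1 := by
            rw [Nat.cast_sub (by omega)]; simp
          rw [e]
          linear_combination hc
        have h := hζrec (2 * k - 1) (by omega)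
        have e1 : 2 * k - 1 + 1 = 2 * k := by omega
        rw [e1] at h
        have ec : ((2 * k - 1 : ℕ) : ℂ) = 2 * (k : ℂ) - 1 := by
          rw [Nat.cast_sub (by omega)]; push_cast; ring
        rw [ec] at h
        -- compute the sum
        have hsum : ∑ l ∈ Finset.Icc 1 (2 * k - 1 - 2), ζ (l + 1) * ζ (2 * k - 1 - l)
            = 4 * (((k : ℂ) + ν) * σ k) := by
          have hfil : ∑ l ∈ (Finset.Icc 1 (2 * k - 1 - 2)).filter (fun l => l % 2 = 1),
              ζ (l + 1) * ζ (2 * k - 1 - l)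
              = ∑ l ∈ Finset.Icc 1 (2 * k - 1 - 2), ζ (l + 1) * ζ (2 * k - 1 - l) := by
            apply Finset.sum_filter_of_ne
            intro l hl hne
            rw [Finset.mem_Icc] at hl
            by_contra hodd
            apply hne
            have e : l + 1 = 2 * (l / 2) + 1 := by omega
            rw [e, (IH (l / 2) (by omega) (by omega)).1, zero_mul]
          rw [← hfil]
          have hset : (Finset.Icc 1 (2 * k - 1 - 2)).filter (fun l => l % 2 = 1)
              = (Finset.Icc 1 (k - 1)).image (fun j => 2 * j - 1) := by
            ext l
            simp only [Finset.mem_filter, Finset.mem_Icc, Finset.mem_image]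
            constructor
            · rintro ⟨⟨h1, h2⟩, h3⟩
              exact ⟨(l + 1) / 2, ⟨by omega, by omega⟩, by omega⟩
            · rintro ⟨j, ⟨hj1, hj2⟩, rfl⟩
              omega
          rw [hset, Finset.sum_image (by intro a ha b hb hab; simp only [Finset.coe_Icc, Set.mem_Icc, Finset.mem_coe, Finset.mem_Icc] at ha hb; beta_reduce at hab; omega)]
          have hterm : ∀ j ∈ Finset.Icc 1 (k - 1),
              ζ (2 * j - 1 + 1) * ζ (2 * k - 1 - (2 * j - 1))
              = (2 * σ j) * (2 * σ (k - j)) := by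
            intro j hj
            rw [Finset.mem_Icc] at hj
            have e2 : 2 * j - 1 + 1 = 2 * j := by omega
            have e3 : 2 * k - 1 - (2 * j - 1) = 2 * (k - j) := by omega
            rw [e2, e3, (IH j (by omega) (by omega)).2,
              (IH (k - j) (by omega) (by omega)).2]
          rw [Finset.sum_congr rfl hterm, hσrec k hk2]
          rw [Finset.mul_sum]
          apply Finset.sum_congr rfl
          intro j _
          ring
        rw [h, hsum]
        rw [show (2 * (ν - 1/2) + (2 * (k:ℂ) - 1) + 2) = 2 * ((k : ℂ) + ν) from by ring]
        field_simp
        ring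
end

section
/- Let η ∈ ℂ, L ∉ {-(m+1)/2 : m ∈ ℕ}, and set D_n := det H_{n+1}(L,η) for n ∈ ℕ₀ and D_{-1} := 1. Then for every n ∈ ℕ₀, D_{n-1}·D_n = (1/(2L+2n+3))·(1 + η²/(L+n+1)²) · ∏_{k=0}^{n-1} (1/(2L+2n-2k+1)^{4k+4}) · (1 + η²/(L+n-k)²)^{2k+3}. In particular, if η and L are real (with L ∉ {-(m+1)/2 : m ∈ ℕ}), the sign of D_{n-1}·D_n equals the sign of 2L+2n+3. -/
noncomputable section
open Finset PowerSeries

def zeta2 (e L : ℂ) : ℂ := (1/(2*L+3)) * (1 + e/(L+1)^2)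

def mu (η L : ℂ) : ℕ → ℂ
  | 0 => zeta2 (η^2) L
  | (m+1) => (1/(2*L+(m:ℂ)+4)) * ((2*η/(L+1)) * mu η L m +
      ∑ j ∈ (Finset.range m).attach, mu η L j.1 * mu η L (m-1-j.1))
  decreasing_by
  · exact Nat.lt_succ_self m
  · exact Nat.lt_succ_of_lt (Finset.mem_range.mp j.2)
  · exact Nat.lt_succ_of_le (le_trans (Nat.sub_le _ _) (Nat.sub_le _ _))

lemma mu_succ (η L : ℂ) (m : ℕ) : mu η L (m+1) = (1/(2*L+(m:ℂ)+4)) * ((2*η/(L+1)) * mu η L m +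
    ∑ j ∈ Finset.range m, mu η L j * mu η L (m-1-j)) := by
  rw [mu, ← Finset.sum_attach (Finset.range m) (fun j => mu η L j * mu η L (m-1-j))]

lemma mu_zero (η L : ℂ) : mu η L 0 = zeta2 (η^2) L := by rw [mu]

-- hL helpers
lemma hL_ne1 {L : ℂ} (hL : ∀ m : ℕ, L ≠ -((m : ℂ) + 1) / 2) (m : ℕ) : 2*L + (m:ℂ) + 2 ≠ 0 := by
  intro h
  apply hL (m+1)
  push_cast
  linear_combination h / 2

lemma hL_ne2 {L : ℂ} (hL : ∀ m : ℕ, L ≠ -((m : ℂ) + 1) / 2) (m : ℕ) : L + (m:ℂ) + 1 ≠ 0 := by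
  intro h
  apply hL (2*m+1)
  push_cast
  linear_combination h

lemma hL_succ {L : ℂ} (hL : ∀ m : ℕ, L ≠ -((m : ℂ) + 1) / 2) : ∀ m : ℕ, L + 1 ≠ -((m : ℂ) + 1) / 2 := by
  intro m h
  apply hL (m+2)
  push_cast
  linear_combination h

-- mu recurrence in cleared form
lemma mu_rec {η L : ℂ} (hL : ∀ m : ℕ, L ≠ -((m : ℂ) + 1) / 2) (m : ℕ) :
    ((2*L+3) + (m:ℂ) + 1) * mu η L (m+1) = (2*η/(L+1)) * mu η L m +
      ∑ j ∈ Finset.range m, mu η L j * mu η L (m-1-j) := by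
  have h1 : 2*L + ((m+2 : ℕ) : ℂ) + 2 ≠ 0 := hL_ne1 hL (m+2)
  push_cast at h1
  have h1' : (2*L + (m:ℂ) + 4 : ℂ) ≠ 0 := fun h => h1 (by linear_combination h)
  have hL1 : (L + 1 : ℂ) ≠ 0 := by
    have := hL_ne2 hL 0
    simpa using this
  rw [mu_succ]
  field_simp
  ring

-- the Dz operator (z d/dz)
def Dz (f : PowerSeries ℂ) : PowerSeries ℂ := PowerSeries.mk fun m => (m : ℂ) * coeff m f

lemma Dz_mul (f g : PowerSeries ℂ) : Dz (f * g) = Dz f * g + f * Dz g := by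
  ext n
  simp only [Dz, coeff_mk, map_add, coeff_mul, Finset.mul_sum, ← Finset.sum_add_distrib]
  refine Finset.sum_congr rfl fun p hp => ?_
  rw [Finset.HasAntidiagonal.mem_antidiagonal] at hp
  rw [← hp]
  push_cast
  ring

lemma Dz_add (f g : PowerSeries ℂ) : Dz (f + g) = Dz f + Dz g := by
  ext n; simp [Dz, mul_add]

lemma Dz_sub (f g : PowerSeries ℂ) : Dz (f - g) = Dz f - Dz g := by
  ext n; simp [Dz, mul_sub]

lemma Dz_C (a : ℂ) : Dz (C a) = 0 := by
  ext n
  simp only [Dz, coeff_mk, coeff_C, map_zero]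
  split
  · next h => simp [h]
  · simp

lemma Dz_one : Dz 1 = 0 := by
  have := Dz_C 1; simpa using this

lemma Dz_X : Dz (X : PowerSeries ℂ) = X := by
  ext n
  simp only [Dz, coeff_mk, coeff_X]
  split
  · next h => simp [h]
  · simp

lemma coeff_X2_mul (h : PowerSeries ℂ) (m : ℕ) : coeff (m+2) (X^2 * h) = coeff m h := by
  have := PowerSeries.coeff_X_pow_mul h 2 m
  simpa [add_comm] using this

lemma coeff_X2_mul_sq (f : ℕ → ℂ) (m : ℕ) :
    coeff (m+1) (X^2 * (PowerSeries.mk f)^2) = ∑ j ∈ Finset.range m, f j * f (m-1-j) := by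
  match m with
  | 0 =>
    have : (X^2 * (PowerSeries.mk f)^2 : PowerSeries ℂ) = X * (X * (PowerSeries.mk f)^2) := by
      ring
    rw [this]
    simp [PowerSeries.coeff_succ_X_mul, PowerSeries.coeff_zero_X_mul]
  | (k+1) =>
    rw [coeff_X2_mul, pow_two, coeff_mul, Finset.Nat.sum_antidiagonal_eq_sum_range_succ_mk]
    refine Finset.sum_congr rfl fun j hj => ?_
    simp [coeff_mk]

-- abstract Riccati lemma
lemma riccati' (s t z0 : ℂ) (f : ℕ → ℂ) (hf0 : f 0 = z0)
    (hrec : ∀ m : ℕ, (s + (m:ℂ) + 1) * f (m+1) = t * f m + ∑ j ∈ Finset.range m, f j * f (m-1-j)) :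
    C s * PowerSeries.mk f + Dz (PowerSeries.mk f)
      = C (s * z0) + C t * (X * PowerSeries.mk f) + X^2 * (PowerSeries.mk f)^2 := by
  ext n
  match n with
  | 0 =>
    have : (X^2 * (PowerSeries.mk f)^2 : PowerSeries ℂ) = X * (X * (PowerSeries.mk f)^2) := by
      ring
    rw [this]
    simp [Dz, coeff_mk, coeff_C, PowerSeries.coeff_zero_X_mul, hf0]
  | (m+1) =>
    simp only [map_add, coeff_C_mul, coeff_mk, Dz, PowerSeries.coeff_succ_X_mul, coeff_C,
      coeff_X2_mul_sq, Nat.succ_ne_zero, if_false]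
    push_cast
    linear_combination hrec m

lemma riccati_mu (η L : ℂ) (hL : ∀ m : ℕ, L ≠ -((m : ℂ) + 1) / 2) :
    C (2*L+3) * PowerSeries.mk (mu η L) + Dz (PowerSeries.mk (mu η L))
      = C ((2*L+3) * zeta2 (η^2) L) + C (2*η/(L+1)) * (X * PowerSeries.mk (mu η L))
        + X^2 * (PowerSeries.mk (mu η L))^2 :=
  riccati' _ _ _ _ (mu_zero η L) (fun m => mu_rec hL m)

lemma Dz_X2 : Dz ((X:PowerSeries ℂ)^2) = 2 * X^2 := by
  rw [pow_two, Dz_mul, Dz_X]; ring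

lemma mul_u (η L : ℂ) (hL : ∀ m : ℕ, L ≠ -((m : ℂ) + 1) / 2) :
    PowerSeries.mk (mu η L) *
      (1 - C (η/((L+1)*(L+2))) * X
         - C (1/(2*L+3)) * (X^2 * PowerSeries.mk (mu η (L+1))))
      = C (zeta2 (η^2) L) := by
  have hA1 : (L + 1 : ℂ) ≠ 0 := by have := hL_ne2 hL 0; simpa using this
  have hA2 : (L + 2 : ℂ) ≠ 0 := by
    have := hL_ne2 hL 1; intro h; exact this (by push_cast; linear_combination h)
  have hB3 : (2*L + 3 : ℂ) ≠ 0 := by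
    have := hL_ne1 hL 1; intro h; exact this (by push_cast; linear_combination h)
  have hB5 : (2*L + 5 : ℂ) ≠ 0 := by
    have := hL_ne1 hL 3; intro h; exact this (by push_cast; linear_combination h)
  set b : ℂ := η/((L+1)*(L+2)) with hb
  set c : ℂ := 1/(2*L+3) with hc
  set m0 : ℂ := zeta2 (η^2) L with hm0
  set n0 : ℂ := zeta2 (η^2) (L+1) with hn0
  set F : PowerSeries ℂ := PowerSeries.mk (mu η L) with hF0
  set G : PowerSeries ℂ := PowerSeries.mk (mu η (L+1)) with hG0
  set u : PowerSeries ℂ := 1 - C b * X - C c * (X^2 * G) with hu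
  -- scalar identities
  have t1 : (2*L+3)*b + b = 2*η/(L+1) := by rw [hb]; field_simp [hA1, hA2]; ring
  have Hb : (L+1)*(L+2)*b = η := by rw [hb]; field_simp
  have Hc : (2*L+3)*c = 1 := by rw [hc]; field_simp
  have Hm : (2*L+3)*(L+1)^2*m0 = (L+1)^2 + η^2 := by
    rw [hm0]; simp only [zeta2]; field_simp [hB3]
  have Hn : (2*L+5)*(L+2)^2*n0 = (L+2)^2 + η^2 := by
    rw [hn0]; simp only [zeta2]
    rw [show (2*(L+1)+3 : ℂ) = 2*L+5 by ring, show (L+1+1 : ℂ) = L+2 by ring]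
    field_simp [hB5]
  have Ha1 : (L+1)*(2*η/(L+1)) = 2*η := by field_simp
  have Ha2 : (L+2)*(2*η/(L+2)) = 2*η := by field_simp
  have t2 : c*((2*L+5)*n0) + (2*η/(L+1))*b - (2*L+3)*b^2 = m0 := by
    apply mul_left_cancel₀ (show ((2*L+3)*(L+1)^2*(L+2)^2 : ℂ) ≠ 0 from
      mul_ne_zero (mul_ne_zero hB3 (pow_ne_zero 2 hA1)) (pow_ne_zero 2 hA2))
    linear_combination ((L+1)^2*((2*L+5)*(L+2)^2*n0)) * Hc + (L+1)^2 * Hn - (L+2)^2 * Hm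
      + ((2*L+3)*(L+1)*(L+2)^2*b) * Ha1
      + (2*η*(2*L+3)*(L+2) - (2*L+3)^2*((L+1)*(L+2)*b + η)) * Hb
  have t3 : (2*η/(L+1)) + (2*η/(L+2)) = 2*b*(2*L+3) := by rw [hb]; field_simp [hA1, hA2]; ring
  have t4 : (2*L+3)*c = 1 := by rw [hc]; field_simp [hB3]
  -- C-mapped versions
  have T1 : C (2*L+3) * C b + C b = C (2*η/(L+1)) := by
    rw [← map_mul, ← map_add, t1]
  have T2 : C c * (C (2*L+5) * C n0) + C (2*η/(L+1)) * C b
      - C (2*L+3) * C b^2 = C m0 := by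
    rw [← map_pow, ← map_mul, ← map_mul, ← map_mul, ← map_mul, ← map_add, ← map_sub, t2]
  have T3 : C (2*η/(L+1)) + C (2*η/(L+2)) = 2 * C b * C (2*L+3) := by
    rw [← map_add, t3]
    rw [show (2 * C b * C (2*L+3) : PowerSeries ℂ) = C (2*b*(2*L+3)) by
      rw [map_mul, map_mul, map_ofNat]]
  have T4 : C (2*L+3) * C c = 1 := by rw [← map_mul, t4, map_one]
  -- Riccati for G
  have hG := riccati_mu η (L+1) (hL_succ hL)
  rw [show (2*(L+1)+3 : ℂ) = 2*L+5 by ring, show (2*η/(L+1+1) : ℂ) = 2*η/(L+2) by ring,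
    ← hn0, ← hG0] at hG
  -- derivative of u
  have hDu : Dz u = -(C b * X) - C c * (2 * (X^2 * G) + X^2 * Dz G) := by
    rw [hu, Dz_sub, Dz_sub, Dz_one, Dz_mul, Dz_mul, Dz_C, Dz_C, Dz_mul, Dz_X, Dz_X2]
    ring
  -- key intermediate identity
  have hI : C (2*L+3) * (u - u^2) - Dz u - C (2*η/(L+1)) * (X * u)
      = X^2 * C m0 := by
    rw [hu]
    rw [hu] at hDu
    simp only [map_add, map_mul, map_ofNat, map_one] at T1 T2 T3 T4 hG ⊢
    linear_combination (-1 : PowerSeries ℂ) * hDu + (C c * X^2) * hG + X * T1 + X^2 * T2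
      + (C c * X^3 * G) * T3 - (C c * X^4 * G^2) * T4
  -- Riccati for F
  have hF := riccati_mu η L hL
  rw [← hm0, ← hF0] at hF
  have hDE : Dz (F * u - C m0) = Dz F * u + F * Dz u := by
    rw [Dz_sub, Dz_mul, Dz_C, sub_zero]
  have h3 : C (2*L+3) * (u * (F * u - C m0)) + Dz (F * u - C m0)
      = X^2 * (F * (F * u - C m0)) := by
    simp only [map_add, map_mul, map_ofNat, map_one] at hF hI ⊢
    linear_combination u * hF - F * hI + hDE
  -- coefficient-wise vanishing
  have hu0 : coeff 0 u = 1 := by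
    rw [hu]
    simp [PowerSeries.coeff_zero_X_mul]
  have hE : ∀ n : ℕ, coeff n (F * u - C m0) = 0 := by
    intro n
    induction n using Nat.strong_induction_on with
    | _ n ih =>
      match n with
      | 0 =>
        rw [map_sub, coeff_zero_eq_constantCoeff, map_mul, hu, hF0]
        simp only [map_sub, map_mul, map_one, map_pow, constantCoeff_X, constantCoeff_C,
          PowerSeries.constantCoeff_mk, mu_zero, ← hm0]
        ring
      | (n+1) =>
        have hc1 := congrArg (coeff (n+1)) h3
        have hsum1 : coeff (n+1) (u * (F * u - C m0))
            = coeff (n+1) (F * u - C m0) := by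
          rw [coeff_mul, Finset.sum_eq_single ((0 : ℕ), n+1)]
          · rw [hu0, one_mul]
          · rintro ⟨p1, p2⟩ hp hne
            rw [Finset.HasAntidiagonal.mem_antidiagonal] at hp
            simp only at hp
            have : p2 < n + 1 ∨ (p1 = 0 ∧ p2 = n + 1) := by omega
            rcases this with h | h
            · simp only
              rw [ih p2 h, mul_zero]
            · exact absurd (by simp [h.1, h.2] : (p1, p2) = ((0:ℕ), n+1)) hne
          · intro h
            exfalso
            apply h
            rw [Finset.HasAntidiagonal.mem_antidiagonal]
            omega
        have hsum2 : coeff (n+1) (X^2 * (F * (F * u - C m0))) = 0 := by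
          match n with
          | 0 =>
            rw [show (X^2 * (F * (F * u - C m0)) : PowerSeries ℂ)
              = X * (X * (F * (F * u - C m0))) by ring]
            rw [PowerSeries.coeff_succ_X_mul, PowerSeries.coeff_zero_X_mul]
          | (k+1) =>
            rw [show k+1+1 = k+2 from rfl, coeff_X2_mul, coeff_mul]
            refine Finset.sum_eq_zero fun p hp => ?_
            rw [Finset.HasAntidiagonal.mem_antidiagonal] at hp
            have : p.2 < k + 1 + 1 := by omega
            rw [ih p.2 this, mul_zero]
        have hDzc : coeff (n+1) (Dz (F * u - C m0))
            = ((n+1 : ℕ) : ℂ) * coeff (n+1) (F * u - C m0) := by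
          simp [Dz, coeff_mk]
        rw [map_add, coeff_C_mul, hsum1, hDzc, hsum2] at hc1
        have hne : (2*L+3+((n:ℂ)+1) : ℂ) ≠ 0 := by
          have := hL_ne1 hL (n+2)
          intro h; exact this (by push_cast; linear_combination h)
        have hzero : (2*L+3+((n:ℂ)+1)) * coeff (n+1) (F * u - C m0) = 0 := by
          push_cast at hc1
          linear_combination hc1
        exact (mul_eq_zero.mp hzero).resolve_left hne
  ext k
  have := hE k
  rw [map_sub, sub_eq_zero] at this
  exact this

lemma coeff_X2_mul_prod (f g : ℕ → ℂ) (m : ℕ) :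
    coeff (m+1) (X^2 * (PowerSeries.mk f * PowerSeries.mk g))
      = ∑ j ∈ Finset.range m, f j * g (m-1-j) := by
  match m with
  | 0 =>
    have : (X^2 * (PowerSeries.mk f * PowerSeries.mk g) : PowerSeries ℂ)
        = X * (X * (PowerSeries.mk f * PowerSeries.mk g)) := by ring
    rw [this]
    simp [PowerSeries.coeff_succ_X_mul, PowerSeries.coeff_zero_X_mul]
  | (k+1) =>
    rw [coeff_X2_mul, coeff_mul, Finset.Nat.sum_antidiagonal_eq_sum_range_succ_mk]
    refine Finset.sum_congr rfl fun j hj => ?_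
    simp [coeff_mk]

lemma conv_rel (η L : ℂ) (hL : ∀ m : ℕ, L ≠ -((m : ℂ) + 1) / 2) (m : ℕ) :
    mu η L (m+1) = (η/((L+1)*(L+2))) * mu η L m
      + (1/(2*L+3)) * ∑ j ∈ Finset.range m, mu η (L+1) j * mu η L (m-1-j) := by
  have h := congrArg (coeff (m+1)) (mul_u η L hL)
  have hexp : PowerSeries.mk (mu η L) *
      (1 - C (η/((L+1)*(L+2))) * X - C (1/(2*L+3)) * (X^2 * PowerSeries.mk (mu η (L+1))))
      = PowerSeries.mk (mu η L) - C (η/((L+1)*(L+2))) * (X * PowerSeries.mk (mu η L))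
        - C (1/(2*L+3)) * (X^2 * (PowerSeries.mk (mu η (L+1)) * PowerSeries.mk (mu η L))) := by
    ring
  rw [hexp] at h
  rw [map_sub, map_sub, coeff_C_mul, coeff_C_mul, PowerSeries.coeff_succ_X_mul,
    coeff_X2_mul_prod, coeff_mk, coeff_mk, coeff_C] at h
  simp only [Nat.succ_ne_zero, if_false] at h
  linear_combination h

lemma sum_split_conv (ν mu' : ℕ → ℂ) (i j' : ℕ) :
    ∑ t ∈ Finset.range (i + j'), ν t * mu' (i + j' - 1 - t)
      = (∑ k ∈ Finset.range j', ν (j'-1-k) * mu' (i+k))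
        + ∑ s ∈ Finset.range i, ν (j'+s) * mu' (i-1-s) := by
  rw [show i + j' = j' + i from Nat.add_comm i j', Finset.sum_range_add]
  congr 1
  · rw [← Finset.sum_range_reflect]
    refine Finset.sum_congr rfl fun k hk => ?_
    rw [Finset.mem_range] at hk
    congr 2
    omega
  · refine Finset.sum_congr rfl fun s hs => ?_
    rw [Finset.mem_range] at hs
    congr 2
    omega

lemma hankel_step (μ ν : ℕ → ℂ) (b c : ℂ)
    (hrel : ∀ m : ℕ, μ (m+1) = b * μ m + c * ∑ j ∈ Finset.range m, ν j * μ (m-1-j)) (n : ℕ) :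
    Matrix.det (Matrix.of fun i j : Fin (n+1) => μ (i.1+j.1))
      = μ 0 ^ (n+1) * c^n * Matrix.det (Matrix.of fun i j : Fin n => ν (i.1+j.1)) := by
  classical
  set u : ℕ → ℕ → ℂ := fun k j =>
    if k = j then 1 else if k+1 = j then -b else if k+2 ≤ j then -(c * ν (j-2-k)) else 0 with hu
  set l : ℕ → ℕ → ℂ := fun i k => if k ≤ i then μ (i-k) else 0 with hl
  set d : ℕ → ℕ → ℂ := fun k j =>
    if k = 0 then (if j = 0 then (1:ℂ) else 0) else (if j = 0 then 0 else c * ν (k+j-2)) with hd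
  set U : Matrix (Fin (n+1)) (Fin (n+1)) ℂ := Matrix.of fun k j => u k.1 j.1 with hU
  set Lm : Matrix (Fin (n+1)) (Fin (n+1)) ℂ := Matrix.of fun i k => l i.1 k.1 with hLm
  set Dm : Matrix (Fin (n+1)) (Fin (n+1)) ℂ := Matrix.of fun k j => d k.1 j.1 with hDm
  have hmain : (Matrix.of fun i j : Fin (n+1) => μ (i.1+j.1)) * U = Lm * Dm := by
    ext i j
    rw [Matrix.mul_apply, Matrix.mul_apply]
    simp only [hU, hLm, hDm, Matrix.of_apply]
    rw [Fin.sum_univ_eq_sum_range (fun k => μ (i.1 + k) * u k j.1) (n+1),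
      Fin.sum_univ_eq_sum_range (fun k => l i.1 k * d k j.1) (n+1)]
    rcases Nat.eq_zero_or_pos j.1 with hj0 | hjpos
    · -- column 0
      rw [hj0]
      rw [Finset.sum_eq_single 0, Finset.sum_eq_single 0]
      · simp [hu, hl, hd]
      · intro k _ hk
        simp [hd, hk]
      · intro h; exact absurd (Finset.mem_range.mpr (Nat.succ_pos n)) h
      · intro k _ hk
        have h1 : ¬ (k = 0) := hk
        have h2 : ¬ (k + 1 = 0) := Nat.succ_ne_zero k
        have h3 : ¬ (k + 2 ≤ 0) := by omega
        simp [hu, h1, h2, h3]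
      · intro h; exact absurd (Finset.mem_range.mpr (Nat.succ_pos n)) h
    · -- column j ≥ 1
      obtain ⟨j', hj'⟩ : ∃ j', j.1 = j' + 1 := ⟨j.1 - 1, by omega⟩
      rw [hj']
      have hjn : j' + 2 ≤ n + 1 := by have := j.2; omega
      have hin : i.1 + 1 ≤ n + 1 := by have := i.2; omega
      have hLHS : ∑ k ∈ Finset.range (n+1), μ (i.1 + k) * u k (j'+1)
          = μ (i.1 + j' + 1) - b * μ (i.1 + j')
            - c * ∑ k ∈ Finset.range j', ν (j'-1-k) * μ (i.1+k) := by
        rw [← Finset.sum_subset (Finset.range_subset_range.mpr hjn) (by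
          intro k _ hk
          rw [Finset.mem_range] at hk
          push_neg at hk
          have h1 : ¬ (k = j'+1) := by omega
          have h2 : ¬ (k + 1 = j'+1) := by omega
          have h3 : ¬ (k + 2 ≤ j'+1) := by omega
          simp only [hu, h1, h2, h3, ↓reduceIte, mul_zero])]
        rw [Finset.sum_range_succ, Finset.sum_range_succ]
        have e1 : u (j'+1) (j'+1) = 1 := by simp [hu]
        have e2 : u j' (j'+1) = -b := by
          have h1 : ¬ (j' = j'+1) := by omega
          simp [hu, h1]
        have e3 : ∑ k ∈ Finset.range j', μ (i.1 + k) * u k (j'+1)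
            = -c * ∑ k ∈ Finset.range j', ν (j'-1-k) * μ (i.1+k) := by
          rw [Finset.mul_sum]
          refine Finset.sum_congr rfl fun k hk => ?_
          rw [Finset.mem_range] at hk
          have h1 : ¬ (k = j'+1) := by omega
          have h2 : ¬ (k + 1 = j'+1) := by omega
          have h3 : k + 2 ≤ j'+1 := by omega
          have h4 : j' + 1 - 2 - k = j' - 1 - k := by omega
          simp only [hu, h1, h2, h3, h4, ↓reduceIte]
          ring
        rw [e1, e2, e3, show i.1 + (j' + 1) = i.1 + j' + 1 from by omega]
        ring
      have hRHS : ∑ k ∈ Finset.range (n+1), l i.1 k * d k (j'+1)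
          = c * ∑ s ∈ Finset.range i.1, ν (j'+s) * μ (i.1-1-s) := by
        rw [← Finset.sum_subset (Finset.range_subset_range.mpr hin) (by
          intro k _ hk
          rw [Finset.mem_range] at hk
          push_neg at hk
          have h1 : ¬ (k ≤ i.1) := by omega
          simp [hl, h1])]
        rw [Finset.sum_range_succ']
        have e0 : l i.1 0 * d 0 (j'+1) = 0 := by simp [hl, hd]
        rw [e0, add_zero, Finset.mul_sum]
        refine Finset.sum_congr rfl fun s hs => ?_
        rw [Finset.mem_range] at hs
        have h1 : s + 1 ≤ i.1 := by omega
        have h2 : ¬ (s + 1 = 0) := by omega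
        have h3 : i.1 - (s+1) = i.1 - 1 - s := by omega
        have h4 : s + 1 + (j'+1) - 2 = j' + s := by omega
        simp [hl, hd, h1, h2, h3, h4]
        ring
      rw [hLHS, hRHS]
      have hsplit := sum_split_conv ν μ i.1 j'
      have hr := hrel (i.1 + j')
      rw [show i.1 + j' - 1 = i.1 + j' - 1 from rfl] at hr
      have hr' : μ (i.1 + j' + 1) = b * μ (i.1 + j')
          + c * ∑ t ∈ Finset.range (i.1 + j'), ν t * μ (i.1 + j' - 1 - t) := hr
      linear_combination hr' + c * hsplit
  -- determinants
  have hdetU : U.det = 1 := by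
    rw [Matrix.det_of_upperTriangular (by
      intro p q hpq
      simp only [id] at hpq
      have h1 : ¬ (p.1 = q.1) := by omega
      have h2 : ¬ (p.1 + 1 = q.1) := by omega
      have h3 : ¬ (p.1 + 2 ≤ q.1) := by omega
      simp [hU, hu, h1, h2, h3])]
    simp [hU, hu]
  have hdetL : Lm.det = μ 0 ^ (n+1) := by
    rw [Matrix.det_of_lowerTriangular _ (by
      intro p q hpq
      have hlt : p < q := by simpa using hpq
      rw [Fin.lt_def] at hlt
      have h1 : ¬ (q.1 ≤ p.1) := not_le.mpr hlt
      show l p.1 q.1 = 0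
      rw [hl]
      simp only
      rw [if_neg h1])]
    simp [hLm, hl]
  have hdetD : Dm.det = c^n * Matrix.det (Matrix.of fun i j : Fin n => ν (i.1+j.1)) := by
    rw [Matrix.det_succ_row_zero]
    rw [Finset.sum_eq_single 0]
    · have hD00 : Dm 0 0 = 1 := by simp [hDm, hd]
      rw [hD00]
      have hsub : (Dm.submatrix Fin.succ (Fin.succAbove 0))
          = c • (Matrix.of fun i j : Fin n => ν (i.1+j.1)) := by
        ext p q
        rw [Fin.succAbove_zero]
        simp only [Matrix.submatrix_apply, hDm, Matrix.of_apply, Matrix.smul_apply]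
        have h1 : ¬ ((Fin.succ p).1 = 0) := by simp [Fin.val_succ]
        have h2 : ¬ ((Fin.succ q).1 = 0) := by simp [Fin.val_succ]
        simp only [hd, h1, h2, if_false, Fin.val_succ]
        rw [show p.1 + 1 + (q.1 + 1) - 2 = p.1 + q.1 by omega]
        simp [smul_eq_mul]
      rw [hsub, Matrix.det_smul]
      simp
    · intro q _ hq
      have : ¬ (q.1 = 0) := fun h => hq (Fin.ext h)
      simp [hDm, hd, this, hq]
    · intro h; exact absurd (Finset.mem_univ _) h
  calc Matrix.det (Matrix.of fun i j : Fin (n+1) => μ (i.1+j.1))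
      = Matrix.det ((Matrix.of fun i j : Fin (n+1) => μ (i.1+j.1)) * U) := by
        rw [Matrix.det_mul, hdetU, mul_one]
    _ = Matrix.det (Lm * Dm) := by rw [hmain]
    _ = μ 0 ^ (n+1) * c^n * Matrix.det (Matrix.of fun i j : Fin n => ν (i.1+j.1)) := by
        rw [Matrix.det_mul, hdetL, hdetD]
        ring

def Phi (e : ℂ) : ℕ → ℂ → ℂ
  | 0, L => zeta2 e L
  | (n+1), L => zeta2 e L ^ (n+2) * (1/(2*L+3))^(n+1) * Phi e n (L+1)

def PhiPair (e : ℂ) : ℕ → ℂ → ℂ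
  | 0, L => zeta2 e L
  | (n+1), L => zeta2 e L ^ (2*n+3) * (1/(2*L+3))^(2*n+1) * PhiPair e n (L+1)

lemma det_mu (η : ℂ) (n : ℕ) : ∀ L : ℂ, (∀ m : ℕ, L ≠ -((m : ℂ) + 1) / 2) →
    Matrix.det (Matrix.of fun i j : Fin (n+1) => mu η L (i.1+j.1)) = Phi (η^2) n L := by
  induction n with
  | zero =>
    intro L _
    rw [Matrix.det_fin_one]
    simp [mu_zero, Phi]
  | succ n ih =>
    intro L hL
    rw [hankel_step (mu η L) (mu η (L+1)) (η/((L+1)*(L+2))) (1/(2*L+3))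
      (fun m => conv_rel η L hL m) (n+1)]
    rw [ih (L+1) (hL_succ hL), mu_zero]
    rfl

lemma phi_pair (e : ℂ) (n : ℕ) : ∀ L : ℂ, Phi e n L * Phi e (n+1) L = PhiPair e (n+1) L := by
  induction n with
  | zero =>
    intro L
    show zeta2 e L * (zeta2 e L ^ 2 * (1/(2*L+3))^1 * Phi e 0 (L+1))
      = zeta2 e L ^ 3 * (1/(2*L+3))^1 * PhiPair e 0 (L+1)
    show zeta2 e L * (zeta2 e L ^ 2 * (1/(2*L+3))^1 * zeta2 e (L+1))
      = zeta2 e L ^ 3 * (1/(2*L+3))^1 * zeta2 e (L+1)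
    ring
  | succ n ih =>
    intro L
    show (zeta2 e L ^ (n+2) * (1/(2*L+3))^(n+1) * Phi e n (L+1))
        * (zeta2 e L ^ (n+3) * (1/(2*L+3))^(n+2) * Phi e (n+1) (L+1))
      = zeta2 e L ^ (2*(n+1)+3) * (1/(2*L+3))^(2*(n+1)+1) * PhiPair e (n+1) (L+1)
    rw [← ih (L+1)]
    ring

def RHSf (e : ℂ) (n : ℕ) (L : ℂ) : ℂ :=
  (1 / (2 * L + 2 * (n : ℂ) + 3)) * (1 + e / (L + (n : ℂ) + 1) ^ 2) *
    ∏ k ∈ Finset.range n,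
      (1 / (2 * L + 2 * (n : ℂ) - 2 * (k : ℂ) + 1) ^ (4 * k + 4)) *
        (1 + e / (L + (n : ℂ) - (k : ℂ)) ^ 2) ^ (2 * k + 3)

lemma pair_eq (e : ℂ) (n : ℕ) : ∀ L : ℂ, PhiPair e n L = RHSf e n L := by
  induction n with
  | zero =>
    intro L
    show zeta2 e L = _
    simp only [RHSf, zeta2, Finset.range_zero, Finset.prod_empty, Nat.cast_zero]
    ring
  | succ n ih =>
    intro L
    show zeta2 e L ^ (2*n+3) * (1/(2*L+3))^(2*n+1) * PhiPair e n (L+1) = _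
    rw [ih (L+1)]
    have hz : zeta2 e L ^ (2*n+3) * (1/(2*L+3))^(2*n+1)
        = (1/(2*L+3))^(4*n+4) * (1+e/(L+1)^2)^(2*n+3) := by
      rw [zeta2, mul_pow]
      ring
    rw [show zeta2 e L ^ (2*n+3) * (1/(2*L+3))^(2*n+1) * RHSf e n (L+1)
        = (zeta2 e L ^ (2*n+3) * (1/(2*L+3))^(2*n+1)) * RHSf e n (L+1) from by ring, hz]
    simp only [RHSf]
    rw [Finset.prod_range_succ]
    have hprod : ∏ k ∈ Finset.range n,
        (1 / (2 * (L+1) + 2 * (n : ℂ) - 2 * (k : ℂ) + 1) ^ (4 * k + 4)) *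
          (1 + e / ((L+1) + (n : ℂ) - (k : ℂ)) ^ 2) ^ (2 * k + 3)
        = ∏ k ∈ Finset.range n,
        (1 / (2 * L + 2 * ((n+1 : ℕ) : ℂ) - 2 * (k : ℂ) + 1) ^ (4 * k + 4)) *
          (1 + e / (L + ((n+1 : ℕ) : ℂ) - (k : ℂ)) ^ 2) ^ (2 * k + 3) := by
      refine Finset.prod_congr rfl fun k hk => ?_
      push_cast
      ring
    rw [← hprod]
    push_cast
    rw [show (2*L+2*((n:ℂ)+1)-2*(n:ℂ)+1) = 2*L+3 by ring,
        show (L+((n:ℂ)+1)-(n:ℂ)) = L+1 by ring, ← one_div_pow]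
    ring

lemma sign_mul_right_pos {a p : ℝ} (hp : 0 < p) : Real.sign (a * p) = Real.sign a := by
  rcases lt_trichotomy a 0 with h|h|h
  · rw [Real.sign_of_neg h, Real.sign_of_neg (mul_neg_of_neg_of_pos h hp)]
  · simp [h]
  · rw [Real.sign_of_pos h, Real.sign_of_pos (mul_pos h hp)]

lemma sign_one_div (a : ℝ) : Real.sign (1/a) = Real.sign a := by
  rcases lt_trichotomy a 0 with h|h|h
  · rw [Real.sign_of_neg h, Real.sign_of_neg (one_div_neg.mpr h)]
  · simp [h]
  · rw [Real.sign_of_pos h, Real.sign_of_pos (one_div_pos.mpr h)]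

/-- Let `D_n := det H_{n+1}(L,η)` for `n ∈ ℕ₀` and `D_{-1} := 1`, where the `m × m` Hankel
matrix `H_m(L,η)` has `(i,j)`-entry `ζ_L(i+j)` for `1 ≤ i,j ≤ m` and `ζ_L` is determined by
`ζ_L(2) = (1/(2L+3))·(1 + η²/(L+1)²)` and
`ζ_L(k+1) = (1/(2L+k+2))·((2η/(L+1))·ζ_L(k) + Σ_{l=1}^{k-2} ζ_L(l+1)·ζ_L(k-l))` for `k ≥ 2`.
Then for every `n ∈ ℕ₀`, `D_{n-1}·D_n` equals
`(1/(2L+2n+3))·(1 + η²/(L+n+1)²) · ∏_{k=0}^{n-1} (1/(2L+2n-2k+1)^{4k+4})·(1 + η²/(L+n-k)²)^{2k+3}`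
(note `D_{n-1} = det H_n(L,η)`, the determinant of the empty matrix being `1`), and, in
particular, if `η` and `L` are real then the sign of `D_{n-1}·D_n` equals the sign of
`2L+2n+3`. -/
theorem hankel_det_products_coulomb (η L : ℂ) (hL : ∀ m : ℕ, L ≠ -((m : ℂ) + 1) / 2)
    (ζ : ℕ → ℂ)
    (hζ2 : ζ 2 = (1 / (2 * L + 3)) * (1 + η ^ 2 / (L + 1) ^ 2))
    (hζrec : ∀ k : ℕ, 2 ≤ k →
      ζ (k + 1) = (1 / (2 * L + (k : ℂ) + 2)) *
        ((2 * η / (L + 1)) * ζ k +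
          ∑ l ∈ Finset.Icc 1 (k - 2), ζ (l + 1) * ζ (k - l))) :
    (∀ n : ℕ,
      Matrix.det (Matrix.of fun i j : Fin n => ζ (i.1 + j.1 + 2)) *
          Matrix.det (Matrix.of fun i j : Fin (n + 1) => ζ (i.1 + j.1 + 2)) =
        (1 / (2 * L + 2 * (n : ℂ) + 3)) * (1 + η ^ 2 / (L + (n : ℂ) + 1) ^ 2) *
          ∏ k ∈ Finset.range n,
            (1 / (2 * L + 2 * (n : ℂ) - 2 * (k : ℂ) + 1) ^ (4 * k + 4)) *
              (1 + η ^ 2 / (L + (n : ℂ) - (k : ℂ)) ^ 2) ^ (2 * k + 3)) ∧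
    (η.im = 0 → L.im = 0 → ∀ n : ℕ,
      Real.sign ((Matrix.det (Matrix.of fun i j : Fin n => ζ (i.1 + j.1 + 2)) *
          Matrix.det (Matrix.of fun i j : Fin (n + 1) => ζ (i.1 + j.1 + 2))).re) =
        Real.sign (2 * L.re + 2 * (n : ℝ) + 3)) := by
  -- ζ is given by mu
  have hzeta : ∀ m : ℕ, ζ (m+2) = mu η L m := by
    intro m
    induction m using Nat.strong_induction_on with
    | _ m ih =>
      match m with
      | 0 =>
        rw [mu_zero, zeta2]
        exact hζ2
      | (m+1) =>
        have hr := hζrec (m+2) (by omega)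
        have hsum : ∑ l ∈ Finset.Icc 1 ((m+2)-2), ζ (l+1) * ζ ((m+2)-l)
            = ∑ j ∈ Finset.range m, mu η L j * mu η L (m-1-j) := by
          rw [show (m+2)-2 = m from rfl, ← Finset.Ico_add_one_right_eq_Icc,
            Finset.sum_Ico_eq_sum_range]
          refine Finset.sum_congr rfl fun j hj => ?_
          rw [Finset.mem_range] at hj
          rw [show 1+j+1 = j+2 from by omega, show m+2-(1+j) = (m-1-j)+2 from by omega,
            ih j (by omega), ih (m-1-j) (by omega)]
        rw [show (m+1)+2 = (m+2)+1 from rfl, hr, hsum, ih m (by omega), mu_succ]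
        push_cast
        ring
    -- end hzeta
  have hM : ∀ n : ℕ, (Matrix.of fun i j : Fin n => ζ (i.1 + j.1 + 2))
      = (Matrix.of fun i j : Fin n => mu η L (i.1 + j.1)) := by
    intro n; ext i j; exact hzeta _
  have key : ∀ n : ℕ,
      Matrix.det (Matrix.of fun i j : Fin n => ζ (i.1 + j.1 + 2)) *
          Matrix.det (Matrix.of fun i j : Fin (n + 1) => ζ (i.1 + j.1 + 2))
        = RHSf (η^2) n L := by
    intro n
    rw [hM n, hM (n+1)]
    match n with
    | 0 =>
      rw [Matrix.det_fin_zero, one_mul, det_mu η 0 L hL]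
      exact pair_eq (η^2) 0 L
    | (n+1) =>
      rw [det_mu η n L hL, det_mu η (n+1) L hL, phi_pair (η^2) n L]
      exact pair_eq (η^2) (n+1) L
  constructor
  · intro n
    rw [key n]
    rfl
  · intro him hlim n
    rw [key n]
    obtain ⟨x, hx⟩ : ∃ x : ℝ, (x:ℂ) = L := ⟨L.re, Complex.ext (by simp) (by simp [hlim])⟩
    obtain ⟨y, hy⟩ : ∃ y : ℝ, (y:ℂ) = η := ⟨η.re, Complex.ext (by simp) (by simp [him])⟩
    have hxr : ∀ m : ℕ, x ≠ -((m:ℝ)+1)/2 := by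
      intro m hmx
      apply hL m
      rw [← hx, hmx]
      push_cast
      ring
    have hcast : RHSf (η^2) n L
        = (((1/(2*x+2*(n:ℝ)+3)) * (1+y^2/(x+(n:ℝ)+1)^2) *
            ∏ k ∈ Finset.range n, (1/(2*x+2*(n:ℝ)-2*(k:ℝ)+1)^(4*k+4)) *
              (1+y^2/(x+(n:ℝ)-(k:ℝ))^2)^(2*k+3) : ℝ) : ℂ) := by
      rw [← hx, ← hy]
      simp only [RHSf]
      push_cast
      ring
    rw [hcast, Complex.ofReal_re]
    have hA : (0:ℝ) < 1 + y^2/(x+(n:ℝ)+1)^2 := by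
      have := div_nonneg (sq_nonneg y) (sq_nonneg (x+(n:ℝ)+1))
      simp only [sq] at this ⊢
      nlinarith
    have hP : (0:ℝ) < ∏ k ∈ Finset.range n, (1/(2*x+2*(n:ℝ)-2*(k:ℝ)+1)^(4*k+4)) *
        (1+y^2/(x+(n:ℝ)-(k:ℝ))^2)^(2*k+3) := by
      refine Finset.prod_pos fun k hk => ?_
      rw [Finset.mem_range] at hk
      have hbase : (2*x+2*(n:ℝ)-2*(k:ℝ)+1) ≠ 0 := by
        intro h0
        obtain ⟨j, hj⟩ : ∃ j, n = k + j + 1 := ⟨n - k - 1, by omega⟩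
        apply hxr (2*j+2)
        have hn : (n:ℝ) = (k:ℝ) + (j:ℝ) + 1 := by rw [hj]; push_cast; ring
        rw [hn] at h0
        push_cast
        linarith
      refine mul_pos (one_div_pos.mpr (Even.pow_pos ⟨2*k+2, by ring⟩ hbase)) ?_
      refine pow_pos ?_ _
      have := div_nonneg (sq_nonneg y) (sq_nonneg (x+(n:ℝ)-(k:ℝ)))
      simp only [sq] at this ⊢
      nlinarith
    rw [sign_mul_right_pos hP, sign_mul_right_pos hA, sign_one_div]
    have hre : L.re = x := by rw [← hx, Complex.ofReal_re]
    rw [hre]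
end
end
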